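/- arXiv:0811.2365 — 9 statements merged into one kernel-verified Lean document; each statement's English description precedes it below -/
import Mathlib

section
/- Let n ≥ 1 and let Td = Td(α,β,γ) ∈ ℝ^{n×n} be a tridiagonal matrix whose first principal diagonals are non-singular (all β_i ≠ 0 and all γ_i ≠ 0). Then the polynomials p(x) = det(x·Id_n − Td) and q(x) = det(x·Id_{n−1} − Td_{n−1}) are coprime in ℝ[x]. -/
open Polynomial Matrix

/-- The `n×n` tridiagonal matrix `Td(α,β,γ)` whose main diagonal reads
`(α_n, α_{n-1}, …, α_1)` from top-left to bottom-right, whose first subdiagonal reads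
`(β_{n-1}, …, β_1)` and whose first superdiagonal reads `(γ_{n-1}, …, γ_1)`. -/
def tridiag (n : ℕ) (a b c : ℕ → ℝ) : Matrix (Fin n) (Fin n) ℝ :=
  Matrix.of fun i j =>
    if (i : ℕ) = (j : ℕ) then a (n - (i : ℕ))
    else if (i : ℕ) = (j : ℕ) + 1 then b (n - 1 - (j : ℕ))
    else if (j : ℕ) = (i : ℕ) + 1 then c (n - 1 - (i : ℕ))
    else 0

/-- The `k`-th principal submatrix of `A`, extracting the first `k` rows and columns. -/
def principalSub {n : ℕ} (A : Matrix (Fin n) (Fin n) ℝ) (k : ℕ) (h : k ≤ n) :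
    Matrix (Fin k) (Fin k) ℝ :=
  A.submatrix (Fin.castLE h) (Fin.castLE h)


variable {R : Type*} [CommRing R]

/-- General tridiagonal matrix over a commutative ring, indexed from top-left. -/
def triR (n : ℕ) (d e f : ℕ → R) : Matrix (Fin n) (Fin n) R :=
  Matrix.of fun i j =>
    if (i : ℕ) = (j : ℕ) then d (i : ℕ)
    else if (i : ℕ) = (j : ℕ) + 1 then e (j : ℕ)
    else if (j : ℕ) = (i : ℕ) + 1 then f (i : ℕ)
    else 0

lemma triR_submatrix {m k : ℕ} (d e f : ℕ → R) (u v : Fin k → Fin m)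
    (hu : ∀ i, (u i : ℕ) = (i : ℕ)) (hv : ∀ j, (v j : ℕ) = (j : ℕ)) :
    (triR m d e f).submatrix u v = triR k d e f := by
  ext i j
  simp [triR, Matrix.submatrix_apply, hu, hv]

lemma triR_apply {n : ℕ} (d e f : ℕ → R) (i j : Fin n) :
    triR n d e f i j =
      if (i : ℕ) = (j : ℕ) then d (i : ℕ)
      else if (i : ℕ) = (j : ℕ) + 1 then e (j : ℕ)
      else if (j : ℕ) = (i : ℕ) + 1 then f (i : ℕ)
      else 0 := rfl

lemma triR_det_rec (n : ℕ) (d e f : ℕ → R) :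
    (triR (n + 2) d e f).det =
      d (n + 1) * (triR (n + 1) d e f).det - e n * f n * (triR n d e f).det := by
  have hval : ∀ (m : ℕ) (p : Fin (m + 1)) (i : Fin m),
      ((p.succAbove i : ℕ)) = if (i : ℕ) < (p : ℕ) then (i : ℕ) else (i : ℕ) + 1 := by
    intro m p i
    rcases lt_or_ge ((i : ℕ)) ((p : ℕ)) with h | h
    · rw [Fin.succAbove_of_castSucc_lt _ _ (by simpa [Fin.lt_def] using h), if_pos h]
      rfl
    · rw [Fin.succAbove_of_le_castSucc _ _ (by simpa [Fin.le_def] using h), if_neg (by omega)]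
      rfl
  have hlast : ∀ (m : ℕ) (i : Fin m), ((Fin.last m).succAbove i : ℕ) = (i : ℕ) := by
    intro m i
    rw [hval, if_pos (by simpa using i.isLt)]
  rw [Matrix.det_succ_row (triR (n + 2) d e f) (Fin.last (n + 1))]
  rw [Fin.sum_univ_castSucc, Fin.sum_univ_castSucc]
  have hzero : ∀ j : Fin n,
      (triR (n + 2) d e f) (Fin.last (n + 1)) (Fin.castSucc (Fin.castSucc j)) = 0 := by
    intro j
    have hj : (j : ℕ) < n := j.isLt
    rw [triR_apply]
    rw [if_neg (by simp; omega), if_neg (by simp; omega), if_neg (by simp; omega)]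
  rw [Finset.sum_eq_zero (fun j _ => by rw [hzero j]; ring)]
  -- last term: j = last
  have hAlast : (triR (n + 2) d e f) (Fin.last (n + 1)) (Fin.last (n + 1)) = d (n + 1) := by
    rw [triR_apply, if_pos rfl]; rfl
  have hAsub : (triR (n + 2) d e f) (Fin.last (n + 1)) (Fin.castSucc (Fin.last n)) = e n := by
    rw [triR_apply]
    rw [if_neg (by simp), if_pos (by simp)]
    simp
  rw [hAlast, hAsub]
  -- the submatrix for j = last is the (n+1) principal submatrix
  have hsub1 : (triR (n + 2) d e f).submatrix (Fin.last (n + 1)).succAbove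
      (Fin.last (n + 1)).succAbove = triR (n + 1) d e f :=
    triR_submatrix d e f _ _ (hlast _) (hlast _)
  rw [hsub1]
  -- the submatrix for j = castSucc last, expand along last column
  set B := (triR (n + 2) d e f).submatrix (Fin.last (n + 1)).succAbove
      (Fin.castSucc (Fin.last n)).succAbove with hB
  have hBlastcol : ∀ i : Fin (n + 1), B i (Fin.last n) =
      (triR (n + 2) d e f) ((Fin.last (n + 1)).succAbove i) ⟨n + 1, by omega⟩ := by
    intro i
    have : (Fin.castSucc (Fin.last n)).succAbove (Fin.last n) = (⟨n + 1, by omega⟩ : Fin (n + 2)) := by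
      apply Fin.ext
      rw [hval]
      simp
    rw [hB, Matrix.submatrix_apply, this]
  have hdetB : B.det = f n * (triR n d e f).det := by
    rw [Matrix.det_succ_column B (Fin.last n), Fin.sum_univ_castSucc]
    have hz : ∀ i : Fin n, B (Fin.castSucc i) (Fin.last n) = 0 := by
      intro i
      rw [hBlastcol, triR_apply]
      have h1 : ((Fin.last (n + 1)).succAbove (Fin.castSucc i) : ℕ) = (i : ℕ) := hlast _ _
      have hi : (i : ℕ) < n := i.isLt
      simp only [h1, Fin.val_mk]
      rw [if_neg (by omega), if_neg (by omega), if_neg (by omega)]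
    rw [Finset.sum_eq_zero (fun i _ => by rw [hz i]; ring), zero_add]
    have hBl : B (Fin.last n) (Fin.last n) = f n := by
      rw [hBlastcol, triR_apply]
      have h1 : ((Fin.last (n + 1)).succAbove (Fin.last n) : ℕ) = n := hlast _ _
      simp only [h1, Fin.val_mk, Fin.val_last]
      rw [if_neg (by omega), if_neg (by omega), if_pos (by trivial)]
    have hsub2 : B.submatrix (Fin.last n).succAbove (Fin.last n).succAbove
        = triR n d e f := by
      rw [hB, Matrix.submatrix_submatrix]
      apply triR_submatrix
      · intro i
        simp only [Function.comp_apply]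
        rw [hlast, hlast]
      · intro j
        simp only [Function.comp_apply]
        rw [hval, hval]
        have hj : (j : ℕ) < n := j.isLt
        simp only [Fin.val_last, Fin.coe_castSucc]
        rw [if_pos hj]
        rw [if_pos (by omega)]
    rw [hBl, hsub2]
    have : (-1 : R) ^ ((Fin.last n : ℕ) + (Fin.last n : ℕ)) = 1 := by
      apply Even.neg_one_pow
      exact ⟨n, by simp⟩
    rw [this, one_mul]
  rw [hdetB]
  simp only [Fin.val_last, Fin.coe_castSucc, zero_add]
  have h1 : (-1 : R) ^ (n + 1 + n) = -1 := Odd.neg_one_pow ⟨n, by omega⟩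
  have h2 : (-1 : R) ^ (n + 1 + (n + 1)) = 1 := Even.neg_one_pow ⟨n + 1, by omega⟩
  rw [h1, h2]
  ring

lemma triR_coprime : ∀ (n : ℕ) (d e f : ℕ → R),
    (∀ i, i < n → IsUnit (e i * f i)) →
    IsCoprime ((triR (n + 1) d e f).det) ((triR n d e f).det)
  | 0, d, e, f, _ => by
    have : (triR 0 d e f).det = 1 := Matrix.det_fin_zero
    rw [this]
    exact isCoprime_one_right
  | (n + 1), d, e, f, h => by
    have ih : IsCoprime ((triR (n + 1) d e f).det) ((triR n d e f).det) :=
      triR_coprime n d e f (fun i hi => h i (by omega))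
    rw [triR_det_rec]
    have h2 : IsCoprime (-(e n * f n * (triR n d e f).det))
        ((triR (n + 1) d e f).det) :=
      ((isCoprime_mul_unit_left_left (h n (by omega)) _ _).mpr ih.symm).neg_left
    have h3 := h2.add_mul_left_left (d (n + 1))
    have : -(e n * f n * (triR n d e f).det) + (triR (n + 1) d e f).det * d (n + 1)
        = d (n + 1) * (triR (n + 1) d e f).det - e n * f n * (triR n d e f).det := by ring
    rwa [this] at h3

lemma charmatrix_tridiag (n : ℕ) (a b c : ℕ → ℝ) :
    charmatrix (tridiag n a b c) =
      triR n (fun i => X - C (a (n - i))) (fun j => -C (b (n - 1 - j)))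
        (fun i => -C (c (n - 1 - i))) := by
  ext i j
  by_cases hij : i = j
  · subst hij
    rw [charmatrix_apply_eq, triR_apply, if_pos rfl]
    simp [tridiag]
  · rw [charmatrix_apply_ne _ _ _ hij, triR_apply]
    have hij' : (i : ℕ) ≠ (j : ℕ) := fun h => hij (Fin.ext h)
    rw [if_neg hij']
    by_cases h1 : (i : ℕ) = (j : ℕ) + 1
    · rw [if_pos h1]
      simp [tridiag, if_neg hij', if_pos h1]
    · rw [if_neg h1]
      by_cases h2 : (j : ℕ) = (i : ℕ) + 1
      · rw [if_pos h2]
        simp [tridiag, if_neg hij', if_neg h1, if_pos h2]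
      · rw [if_neg h2]
        simp [tridiag, if_neg hij', if_neg h1, if_neg h2]

lemma charmatrix_principalSub (n k : ℕ) (h : k ≤ n) (a b c : ℕ → ℝ) :
    charmatrix (principalSub (tridiag n a b c) k h) =
      triR k (fun i => X - C (a (n - i))) (fun j => -C (b (n - 1 - j)))
        (fun i => -C (c (n - 1 - i))) := by
  ext i j
  by_cases hij : i = j
  · subst hij
    rw [charmatrix_apply_eq, triR_apply, if_pos rfl]
    simp [principalSub, tridiag]
  · rw [charmatrix_apply_ne _ _ _ hij, triR_apply]
    have hij' : (i : ℕ) ≠ (j : ℕ) := fun hh => hij (Fin.ext hh)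
    rw [if_neg hij']
    by_cases h1 : (i : ℕ) = (j : ℕ) + 1
    · rw [if_pos h1]
      simp [principalSub, tridiag, if_neg hij', if_pos h1]
    · rw [if_neg h1]
      by_cases h2 : (j : ℕ) = (i : ℕ) + 1
      · rw [if_pos h2]
        simp [principalSub, tridiag, if_neg hij', if_neg h1, if_pos h2]
      · rw [if_neg h2]
        simp [principalSub, tridiag, if_neg hij', if_neg h1, if_neg h2]

/-- If `Td = Td(α,β,γ)` has non-singular first principal diagonals (all `β_i ≠ 0` and
all `γ_i ≠ 0` for `1 ≤ i ≤ n-1`), then `p(x) = det(x·Id_n − Td)` and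
`q(x) = det(x·Id_{n-1} − Td_{n-1})` are coprime in `ℝ[x]`. -/
theorem stmt_1 (n : ℕ) (hn : 1 ≤ n) (a b c : ℕ → ℝ)
    (hb : ∀ k, 1 ≤ k → k ≤ n - 1 → b k ≠ 0)
    (hc : ∀ k, 1 ≤ k → k ≤ n - 1 → c k ≠ 0)
    (p q : Polynomial ℝ)
    (hp : p = (tridiag n a b c).charpoly)
    (hq : q = (principalSub (tridiag n a b c) (n - 1) (Nat.sub_le n 1)).charpoly) :
    IsCoprime p q := by
  obtain ⟨m, rfl⟩ : ∃ m, n = m + 1 := ⟨n - 1, by omega⟩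
  rw [hp, hq, Matrix.charpoly, Matrix.charpoly, charmatrix_tridiag,
    charmatrix_principalSub (m + 1) ((m + 1) - 1) (Nat.sub_le (m + 1) 1) a b c]
  simp only [Nat.add_sub_cancel]
  apply triR_coprime
  intro i hi
  have : (-C (b (m - i)) * -C (c (m - i)) : Polynomial ℝ)
      = C (b (m - i) * c (m - i)) := by
    rw [Polynomial.C_mul]
    ring
  rw [this]
  apply Polynomial.isUnit_C.mpr
  apply IsUnit.mul <;> apply Ne.isUnit
  · exact hb (m - i) (by omega) (by omega)
  · exact hc (m - i) (by omega) (by omega)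
end

section
/- Let p, q be monic real polynomials of degrees n and n−1 such that SRemS(p,q) has no degree breakdown, with signs ε_1,…,ε_{n−1} ∈ {−1,+1} and β_1,…,β_{n−1} > 0 arising in its defining recurrence. Define the classical signed remainder sequence r_0 = p, r_1 = q, and r_{k+1} = −(remainder of r_{k−1} in the Euclidean division by r_k) for k ≥ 1. Then the leading coefficients of r_0 and r_1 are positive, and for 2 ≤ k ≤ n the sign of the leading coefficient of r_k equals the product of the ε_j over all indices j with 1 ≤ j ≤ k−1 and j ≡ k−1 (mod 2); that is, the sequence of signs of leading coefficients is (1, 1, ε_1, ε_2, ε_1ε_3, ε_2ε_4, ε_1ε_3ε_5, …). -/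
open Polynomial Matrix BigOperators Finset

/-- Data witnessing that the signed remainders sequence `SRemS(p,q)` of the monic
polynomials `p` (degree `n`) and `q` (degree `n-1`) has no degree breakdown:
a sequence of monic polynomials `P k` of degree `n - k` with `P 0 = p`, `P 1 = q`,
satisfying the recurrence `P k = (X - α_{k+1})·P (k+1) - ε_{k+1}·β_{k+1}²·P (k+2)`
with `β_{k+1} > 0` and `ε_{k+1} = ±1`, and `P (n-1) = X - α_n`. -/
structure SRemSData (n : ℕ) (p q : Polynomial ℝ) : Type where
  P : ℕ → Polynomial ℝ
  α : ℕ → ℝ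
  β : ℕ → ℝ
  ε : ℕ → ℝ
  hP0 : P 0 = p
  hP1 : P 1 = q
  hmonic : ∀ k, k ≤ n → (P k).Monic
  hdeg : ∀ k, k ≤ n → (P k).natDegree = n - k
  hrec : ∀ k, k + 2 ≤ n →
    P k = (Polynomial.X - Polynomial.C (α (k + 1))) * P (k + 1)
            - Polynomial.C (ε (k + 1) * β (k + 1) ^ 2) * P (k + 2)
  hlast : 1 ≤ n → P (n - 1) = Polynomial.X - Polynomial.C (α n)
  hβ : ∀ k, 1 ≤ k → k ≤ n - 1 → 0 < β k
  hε : ∀ k, 1 ≤ k → k ≤ n - 1 → ε k = 1 ∨ ε k = -1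

/-- The tridiagonal matrix `Td(p,q)` associated to a no-degree-breakdown signed
remainders sequence. -/
def SRemSData.td {n : ℕ} {p q : Polynomial ℝ} (d : SRemSData n p q) :
    Matrix (Fin n) (Fin n) ℝ :=
  tridiag n d.α d.β fun k => d.ε k * d.β k

/-- classical signed remainder sequence -/
noncomputable def srem (p q : Polynomial ℝ) : ℕ → Polynomial ℝ
  | 0 => p
  | 1 => q
  | (k + 2) => -(srem p q k % srem p q (k + 1))

/-
Every classical remainder is a nonzero constant multiple of the corresponding monic
remainder: `r_k = c_k P_k` with `c_k = ∏ ε_j β_j²` over `1 ≤ j ≤ k - 1`, `j ≡ k - 1 (mod 2)`.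
Indeed, if `r_k = c_k P_k` and `r_{k+1} = c_{k+1} P_{k+1}`, then the recurrence
`P_k = (X - α_{k+1}) P_{k+1} - ε_{k+1} β_{k+1}² P_{k+2}` is a Euclidean division, so
`r_{k+2} = -(r_k mod r_{k+1}) = ε_{k+1} β_{k+1}² c_k P_{k+2}`. Since the `P_k` are monic and
`β_j > 0`, the sign of the leading coefficient of `r_k` is that of `∏ ε_j`.
-/

theorem Polynomial.mod_C_mul_of_monic {K : Type*} [Field K] {c : K} (hc : c ≠ 0)
    {g : K[X]} (hg : g.Monic) (f : K[X]) : f % (C c * g) = f %ₘ g := by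
  rw [mod_def, leadingCoeff_mul, leadingCoeff_C, hg.leadingCoeff, mul_one, mul_right_comm,
    ← C_mul, mul_inv_cancel₀ hc, C_1, one_mul]

theorem Real.sign_prod_mul_of_pos {ι : Type*} (s : Finset ι) {ε b : ι → ℝ}
    (hε : ∀ i ∈ s, ε i = 1 ∨ ε i = -1) (hb : ∀ i ∈ s, 0 < b i) :
    Real.sign (∏ i ∈ s, ε i * b i) = ∏ i ∈ s, ε i := by
  have hb_pos : 0 < ∏ i ∈ s, b i := prod_pos hb
  rw [prod_mul_distrib]
  rcases prod_induction ε (fun x => x = 1 ∨ x = -1)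
      (by rintro x y (rfl | rfl) (rfl | rfl) <;> norm_num) (by norm_num) hε with h | h
  · rw [h, one_mul, Real.sign_of_pos hb_pos]
  · rw [h, neg_one_mul, Real.sign_of_neg (neg_neg_of_pos hb_pos)]

def parityIndices (k : ℕ) : Finset ℕ :=
  (Icc 1 (k - 1)).filter (fun j => j % 2 = (k - 1) % 2)

theorem mem_parityIndices {j k : ℕ} :
    j ∈ parityIndices k ↔ 1 ≤ j ∧ j ≤ k - 1 ∧ j % 2 = (k - 1) % 2 := by
  simp [parityIndices, and_assoc]

@[simp] theorem parityIndices_zero : parityIndices 0 = ∅ := rfl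

@[simp] theorem parityIndices_one : parityIndices 1 = ∅ := rfl

theorem parityIndices_add_two (k : ℕ) :
    parityIndices (k + 2) = insert (k + 1) (parityIndices k) := by
  ext j
  simp only [mem_insert, mem_parityIndices]
  omega

theorem succ_notMem_parityIndices (k : ℕ) : k + 1 ∉ parityIndices k := by
  simp only [mem_parityIndices]
  omega

namespace SRemSData

variable {n : ℕ} {p q : ℝ[X]} (d : SRemSData n p q)

def scale (k : ℕ) : ℝ := ∏ j ∈ parityIndices k, d.ε j * d.β j ^ 2

theorem scale_add_two (k : ℕ) :
    d.scale (k + 2) = d.ε (k + 1) * d.β (k + 1) ^ 2 * d.scale k := by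
  rw [scale, parityIndices_add_two, prod_insert (succ_notMem_parityIndices k), scale]

theorem ε_eq_one_or_neg_one_of_mem {j k : ℕ} (hk : k ≤ n) (hj : j ∈ parityIndices k) :
    d.ε j = 1 ∨ d.ε j = -1 := by
  rw [mem_parityIndices] at hj
  exact d.hε j hj.1 (by omega)

theorem β_pos_of_mem {j k : ℕ} (hk : k ≤ n) (hj : j ∈ parityIndices k) : 0 < d.β j := by
  rw [mem_parityIndices] at hj
  exact d.hβ j hj.1 (by omega)

theorem sign_scale {k : ℕ} (hk : k ≤ n) :
    Real.sign (d.scale k) = ∏ j ∈ parityIndices k, d.ε j :=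
  Real.sign_prod_mul_of_pos _ (fun _ hj => d.ε_eq_one_or_neg_one_of_mem hk hj)
    (fun _ hj => pow_pos (d.β_pos_of_mem hk hj) 2)

theorem scale_ne_zero {k : ℕ} (hk : k ≤ n) : d.scale k ≠ 0 := by
  intro h
  rw [← Real.sign_eq_zero_iff, d.sign_scale hk, prod_eq_zero_iff] at h
  obtain ⟨j, hj, hεj⟩ := h
  rcases d.ε_eq_one_or_neg_one_of_mem hk hj with h | h <;> simp [h] at hεj

theorem modByMonic_eq {k : ℕ} (hk : k + 2 ≤ n) :
    d.P k %ₘ d.P (k + 1) = -(C (d.ε (k + 1) * d.β (k + 1) ^ 2) * d.P (k + 2)) := by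
  have hdeg : (C (d.ε (k + 1) * d.β (k + 1) ^ 2) * d.P (k + 2)).degree
      < (d.P (k + 1)).degree := by
    refine degree_lt_degree ((natDegree_C_mul_le _ _).trans_lt ?_)
    rw [d.hdeg _ hk, d.hdeg _ (by omega)]
    omega
  refine (div_modByMonic_unique (X - C (d.α (k + 1))) _ (d.hmonic _ (by omega))
    ⟨?_, by rwa [degree_neg]⟩).2
  rw [d.hrec k hk]
  ring

theorem srem_eq_C_scale_mul {k : ℕ} (hk : k ≤ n) : srem p q k = C (d.scale k) * d.P k := by
  induction k using Nat.twoStepInduction with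
  | zero => simp [srem, scale, d.hP0]
  | one => simp [srem, scale, d.hP1]
  | more k ih ih₁ =>
    have hk₁ : k + 1 ≤ n := by omega
    calc srem p q (k + 2)
        = -(C (d.scale k) * d.P k % (C (d.scale (k + 1)) * d.P (k + 1))) := by
          rw [← ih (by omega), ← ih₁ hk₁]; rfl
      _ = -(C (d.scale k) * (d.P k %ₘ d.P (k + 1))) := by
          rw [mod_C_mul_of_monic (d.scale_ne_zero hk₁) (d.hmonic _ hk₁), ← smul_eq_C_mul,
            smul_modByMonic, smul_eq_C_mul]
      _ = C (d.scale (k + 2)) * d.P (k + 2) := by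
          rw [d.modByMonic_eq hk, d.scale_add_two]
          simp only [C_mul]
          ring

theorem leadingCoeff_srem {k : ℕ} (hk : k ≤ n) : (srem p q k).leadingCoeff = d.scale k := by
  rw [d.srem_eq_C_scale_mul hk, leadingCoeff_mul, leadingCoeff_C, (d.hmonic k hk).leadingCoeff,
    mul_one]

end SRemSData

theorem stmt_3_general (n : ℕ) (hn : 1 ≤ n) (p q : Polynomial ℝ)
    (d : SRemSData n p q) :
    0 < (srem p q 0).leadingCoeff ∧ 0 < (srem p q 1).leadingCoeff ∧
      ∀ k, 2 ≤ k → k ≤ n →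
        Real.sign ((srem p q k).leadingCoeff) =
          ∏ j ∈ (Finset.Icc 1 (k - 1)).filter (fun j => j % 2 = (k - 1) % 2), d.ε j := by
  refine ⟨?_, ?_, fun k _ hk => ?_⟩
  · simp [d.leadingCoeff_srem (Nat.zero_le n), SRemSData.scale]
  · simp [d.leadingCoeff_srem hn, SRemSData.scale]
  · rw [d.leadingCoeff_srem hk, d.sign_scale hk]
    rfl

/-- Let `p, q` be monic of degrees `n`, `n-1` with `SRemS(p,q)` having no degree
breakdown, with signs `ε_k` and `β_k > 0` from its defining recurrence.  For the
classical signed remainder sequence `r_0 = p`, `r_1 = q`,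
`r_{k+1} = −(r_{k−1} mod r_k)`, the leading coefficients of `r_0` and `r_1` are
positive, and for `2 ≤ k ≤ n` the sign of the leading coefficient of `r_k` equals
`∏ ε_j` over `1 ≤ j ≤ k−1` with `j ≡ k−1 (mod 2)`. -/
theorem stmt_3 (n : ℕ) (hn : 1 ≤ n) (p q : Polynomial ℝ)
    (hp : p.Monic) (hpdeg : p.natDegree = n)
    (hq : q.Monic) (hqdeg : q.natDegree = n - 1)
    (d : SRemSData n p q) :
    0 < (srem p q 0).leadingCoeff ∧ 0 < (srem p q 1).leadingCoeff ∧
      ∀ k, 2 ≤ k → k ≤ n →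
        Real.sign ((srem p q k).leadingCoeff) =
          ∏ j ∈ (Finset.Icc 1 (k - 1)).filter (fun j => j % 2 = (k - 1) % 2), d.ε j :=
  stmt_3_general n hn p q d
end

section
/- Let p and q be monic real polynomials of respective degrees n and n−1 such that SRemS(p,q) has no degree breakdown. Then there exists an invertible lower triangular matrix L ∈ ℝ^{n×n} such that Td(p,q) = L·C_p^T·L^{−1}. -/
open Polynomial Matrix BigOperators Finset

/-- The companion matrix of `p(x) = x^n + a_{n-1}x^{n-1} + ⋯ + a_0`: 1's on the first
subdiagonal, last column `(−a_0, …, −a_{n-1})ᵀ`, zeros elsewhere. -/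
def companion (n : ℕ) (p : Polynomial ℝ) : Matrix (Fin n) (Fin n) ℝ :=
  Matrix.of fun i j =>
    if (j : ℕ) = n - 1 then -p.coeff (i : ℕ)
    else if (i : ℕ) = (j : ℕ) + 1 then 1
    else 0

namespace SRemSData

variable {n : ℕ} {p q : Polynomial ℝ} (d : SRemSData n p q)

/-- scaling constants -/
noncomputable def c (i : ℕ) : ℝ := ∏ m ∈ Finset.Icc 1 (n - 1 - i), (d.ε m * d.β m)

lemma c_ne_zero (i : ℕ) : d.c i ≠ 0 := by
  unfold SRemSData.c
  rw [Finset.prod_ne_zero_iff]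
  intro m hm
  rw [Finset.mem_Icc] at hm
  have h1 := d.hβ m hm.1 (by omega)
  rcases d.hε m hm.1 (by omega) with h | h <;> rw [h] <;> nlinarith

lemma c_step (i : ℕ) (h : i + 2 ≤ n) :
    d.c i = d.ε (n - 1 - i) * d.β (n - 1 - i) * d.c (i + 1) := by
  unfold SRemSData.c
  have h1 : n - 1 - i = (n - 2 - i) + 1 := by omega
  have h2 : n - 1 - (i + 1) = n - 2 - i := by omega
  rw [h1, h2, Finset.prod_Icc_succ_top (by omega)]
  ring

/-- the lower triangular conjugating matrix -/
noncomputable def Lmat : Matrix (Fin n) (Fin n) ℝ :=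
  Matrix.of fun i j => d.c (i : ℕ) * (d.P (n - (i : ℕ))).coeff (j : ℕ)

lemma P_n_eq_one (hn : 1 ≤ n) : d.P n = 1 := by
  have h1 := d.hmonic n le_rfl
  have h2 := d.hdeg n le_rfl
  exact h1.natDegree_eq_zero.mp (by omega)

/-- key polynomial identity for each row -/
lemma key (hn : 1 ≤ n) (hp : p.Monic) (hpdeg : p.natDegree = n) (i : Fin n) :
    ∑ k : Fin n, Polynomial.C (d.td i k * d.c (k : ℕ)) * d.P (n - (k : ℕ))
      = Polynomial.C (d.c (i : ℕ)) * (Polynomial.X * d.P (n - (i : ℕ)))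
        - (if (i : ℕ) = n - 1 then Polynomial.C (d.c (i : ℕ)) * p else 0) := by
  obtain ⟨iv, hi⟩ := i
  simp only [Fin.val_mk] at *
  have hsummand : ∀ k : Fin n,
      Polynomial.C (d.td ⟨iv, hi⟩ k * d.c (k : ℕ)) * d.P (n - (k : ℕ))
      = (if k = ⟨iv, hi⟩ then Polynomial.C (d.α (n - iv) * d.c iv) * d.P (n - iv) else 0)
        + (if iv = (k : ℕ) + 1 then
            Polynomial.C (d.β (n - 1 - (k : ℕ)) * d.c (k : ℕ)) * d.P (n - (k : ℕ)) else 0)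
        + (if (k : ℕ) = iv + 1 then
            Polynomial.C (d.ε (n - 1 - iv) * d.β (n - 1 - iv) * d.c (k : ℕ)) * d.P (n - (k : ℕ))
            else 0) := by
    intro k
    simp only [SRemSData.td, tridiag, Matrix.of_apply, Fin.val_mk]
    by_cases h1 : iv = (k : ℕ)
    · have hk : k = ⟨iv, hi⟩ := Fin.ext h1.symm
      rw [if_pos h1, if_pos hk, if_neg (show ¬ iv = (k : ℕ) + 1 by omega),
        if_neg (show ¬ (k : ℕ) = iv + 1 by omega), hk]
      simp [h1.symm]
    · have hkne : ¬ k = (⟨iv, hi⟩ : Fin n) := by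
        simp only [Fin.ext_iff, Fin.val_mk]; omega
      rw [if_neg h1, if_neg hkne]
      by_cases h2 : iv = (k : ℕ) + 1
      · rw [if_pos h2, if_pos h2, if_neg (show ¬ (k : ℕ) = iv + 1 by omega)]
        ring
      · rw [if_neg h2, if_neg h2]
        by_cases h3 : (k : ℕ) = iv + 1
        · rw [if_pos h3, if_pos h3]; ring
        · rw [if_neg h3, if_neg h3]; simp
  rw [Finset.sum_congr rfl (fun k _ => hsummand k), Finset.sum_add_distrib,
    Finset.sum_add_distrib]
  have S1 : (∑ k : Fin n, if k = (⟨iv, hi⟩ : Fin n) then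
      Polynomial.C (d.α (n - iv) * d.c iv) * d.P (n - iv) else 0)
      = Polynomial.C (d.α (n - iv) * d.c iv) * d.P (n - iv) := by
    rw [Finset.sum_ite_eq' Finset.univ]; simp
  rw [S1]
  by_cases h0 : iv = 0
  · -- first row
    subst h0
    have S2 : (∑ k : Fin n, if 0 = (k : ℕ) + 1 then
        Polynomial.C (d.β (n - 1 - (k : ℕ)) * d.c (k : ℕ)) * d.P (n - (k : ℕ)) else 0) = 0 :=
      Finset.sum_eq_zero fun k _ => if_neg (by omega)
    rw [S2]
    by_cases hn1 : n = 1
    · subst hn1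
      have S3 : (∑ k : Fin 1, if (k : ℕ) = 0 + 1 then
          Polynomial.C (d.ε (1 - 1 - 0) * d.β (1 - 1 - 0) * d.c (k : ℕ)) * d.P (1 - (k : ℕ))
          else 0) = 0 :=
        Finset.sum_eq_zero fun k _ => if_neg (by omega)
      rw [S3]
      have hP1 : d.P 1 = 1 := d.P_n_eq_one le_rfl
      have hp0 : p = Polynomial.X - Polynomial.C (d.α 1) := by
        have h := d.hlast le_rfl
        simp only [Nat.sub_self] at h
        rw [← h, d.hP0]
      rw [if_pos (show (0 : ℕ) = 1 - 1 by norm_num)]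
      simp only [Nat.sub_zero]
      rw [hP1]
      simp only [_root_.map_mul]
      linear_combination Polynomial.C (d.c 0) * hp0
    · -- n ≥ 2, first row
      have h2n : 2 ≤ n := by omega
      have S3 : (∑ k : Fin n, if (k : ℕ) = 0 + 1 then
          Polynomial.C (d.ε (n - 1 - 0) * d.β (n - 1 - 0) * d.c (k : ℕ)) * d.P (n - (k : ℕ))
          else 0)
          = Polynomial.C (d.ε (n - 1) * d.β (n - 1) * d.c 1) * d.P (n - 1) := by
        have he : ∀ k : Fin n, ((k : ℕ) = 0 + 1) = (k = (⟨1, by omega⟩ : Fin n)) := by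
          intro k
          simp [Fin.ext_iff]
        simp_rw [he]
        rw [Finset.sum_ite_eq' Finset.univ]
        simp
      rw [S3, if_neg (by omega)]
      have hPn : d.P n = 1 := d.P_n_eq_one hn
      have hPn1 : d.P (n - 1) = Polynomial.X - Polynomial.C (d.α n) := d.hlast hn
      have hc0 : d.c 0 = d.ε (n - 1) * d.β (n - 1) * d.c 1 := by
        have h := d.c_step 0 (by omega)
        simpa using h
      rw [Nat.sub_zero, hPn, hPn1, hc0]
      simp only [_root_.map_mul]
      ring
  · -- iv ≥ 1
    have S2 : (∑ k : Fin n, if iv = (k : ℕ) + 1 then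
        Polynomial.C (d.β (n - 1 - (k : ℕ)) * d.c (k : ℕ)) * d.P (n - (k : ℕ)) else 0)
        = Polynomial.C (d.β (n - iv) * d.c (iv - 1)) * d.P (n - iv + 1) := by
      have he : ∀ k : Fin n, (iv = (k : ℕ) + 1) = (k = (⟨iv - 1, by omega⟩ : Fin n)) := by
        intro k; simp [Fin.ext_iff]; omega
      simp_rw [he]
      rw [Finset.sum_ite_eq' Finset.univ]
      simp only [Finset.mem_univ, if_pos, Fin.val_mk]
      have e1 : n - 1 - (iv - 1) = n - iv := by omega
      have e2 : n - (iv - 1) = n - iv + 1 := by omega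
      rw [e1, e2]
    rw [S2]
    by_cases htop : iv = n - 1
    · -- last row
      subst htop
      have S3 : (∑ k : Fin n, if (k : ℕ) = n - 1 + 1 then
          Polynomial.C (d.ε (n - 1 - (n - 1)) * d.β (n - 1 - (n - 1)) * d.c (k : ℕ))
            * d.P (n - (k : ℕ)) else 0) = 0 :=
        Finset.sum_eq_zero fun k _ => if_neg (by omega)
      rw [S3, if_pos rfl, add_zero]
      have h2n : 2 ≤ n := by omega
      have hrec0 := d.hrec 0 (by omega)
      rw [d.hP0] at hrec0
      norm_num at hrec0
      have hcn1 : d.c (n - 1 - 1) = d.ε 1 * d.β 1 * d.c (n - 1) := by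
        have h := d.c_step (n - 2) (by omega)
        have e : n - 1 - (n - 2) = 1 := by omega
        have e' : n - 2 + 1 = n - 1 := by omega
        have e'' : n - 1 - 1 = n - 2 := by omega
        rw [e, e'] at h
        rw [e'']
        exact h
      have e1 : n - (n - 1) = 1 := by omega
      have e2 : n - (n - 1) + 1 = 2 := by omega
      rw [e2, e1, hcn1]
      simp only [_root_.map_mul, map_pow] at hrec0 ⊢
      linear_combination Polynomial.C (d.c (n - 1)) * hrec0
    · -- middle rows: 1 ≤ iv ≤ n - 2
      have hmid : iv + 2 ≤ n := by omega
      have S3 : (∑ k : Fin n, if (k : ℕ) = iv + 1 then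
          Polynomial.C (d.ε (n - 1 - iv) * d.β (n - 1 - iv) * d.c (k : ℕ))
            * d.P (n - (k : ℕ)) else 0)
          = Polynomial.C (d.ε (n - 1 - iv) * d.β (n - 1 - iv) * d.c (iv + 1))
            * d.P (n - (iv + 1)) := by
        have he : ∀ k : Fin n, ((k : ℕ) = iv + 1) = (k = (⟨iv + 1, by omega⟩ : Fin n)) := by
          intro k; simp [Fin.ext_iff]
        simp_rw [he]
        rw [Finset.sum_ite_eq' Finset.univ]
        simp
      rw [S3, if_neg (by omega)]
      have hrec1 := d.hrec (n - iv - 1) (by omega)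
      have e1 : n - iv - 1 + 1 = n - iv := by omega
      have e2 : n - iv - 1 + 2 = n - iv + 1 := by omega
      have e3 : n - (iv + 1) = n - iv - 1 := by omega
      rw [e1, e2] at hrec1
      rw [e3, hrec1]
      have hc2 : d.c (iv - 1) = d.ε (n - iv) * d.β (n - iv) * d.c iv := by
        have h := d.c_step (iv - 1) (by omega)
        have e : n - 1 - (iv - 1) = n - iv := by omega
        have e' : iv - 1 + 1 = iv := by omega
        rw [e, e'] at h
        exact h
      have hc1 : d.c iv = d.ε (n - 1 - iv) * d.β (n - 1 - iv) * d.c (iv + 1) :=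
        d.c_step iv hmid
      rw [hc2, hc1]
      simp only [_root_.map_mul, map_pow]
      ring

theorem main (hn : 1 ≤ n) (hp : p.Monic) (hpdeg : p.natDegree = n) :
    ∃ L : Matrix (Fin n) (Fin n) ℝ, IsUnit L ∧ (∀ i j : Fin n, i < j → L i j = 0) ∧
      d.td = L * (companion n p)ᵀ * L⁻¹ := by
  have hn1 : n - 1 < n := by omega
  have hlow : ∀ i j : Fin n, i < j → d.Lmat i j = 0 := by
    intro i j hij
    have hd := d.hdeg (n - (i : ℕ)) (by omega)
    have hlt : (d.P (n - (i : ℕ))).natDegree < (j : ℕ) := by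
      rw [hd]
      have := i.isLt
      have hij' : (i : ℕ) < (j : ℕ) := hij
      omega
    simp [SRemSData.Lmat, Polynomial.coeff_eq_zero_of_natDegree_lt hlt]
  have hdiag : ∀ i : Fin n, d.Lmat i i = d.c (i : ℕ) := by
    intro i
    have hm := d.hmonic (n - (i : ℕ)) (by omega)
    have hd := d.hdeg (n - (i : ℕ)) (by omega)
    have e : n - (n - (i : ℕ)) = (i : ℕ) := by have := i.isLt; omega
    rw [e] at hd
    simp only [SRemSData.Lmat, Matrix.of_apply]
    have h1 := hm.coeff_natDegree
    rw [hd] at h1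
    rw [h1, mul_one]
  have hbt : d.Lmat.BlockTriangular OrderDual.toDual := by
    intro i j hij
    exact hlow i j hij
  have hdet : d.Lmat.det = ∏ i : Fin n, d.c (i : ℕ) := by
    rw [Matrix.det_of_lowerTriangular _ hbt]
    exact Finset.prod_congr rfl fun i _ => hdiag i
  have hunit : IsUnit d.Lmat := by
    rw [Matrix.isUnit_iff_isUnit_det, hdet, isUnit_iff_ne_zero, Finset.prod_ne_zero_iff]
    exact fun i _ => d.c_ne_zero (i : ℕ)
  have hcomm : d.td * d.Lmat = d.Lmat * (companion n p)ᵀ := by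
    ext i j
    rw [Matrix.mul_apply, Matrix.mul_apply]
    have hLHS : (∑ k : Fin n, d.td i k * d.Lmat k j)
        = (∑ k : Fin n, Polynomial.C (d.td i k * d.c (k : ℕ)) * d.P (n - (k : ℕ))).coeff
            (j : ℕ) := by
      rw [Polynomial.finset_sum_coeff]
      refine Finset.sum_congr rfl fun k _ => ?_
      simp only [SRemSData.Lmat, Matrix.of_apply, Polynomial.coeff_C_mul]
      ring
    rw [hLHS, d.key hn hp hpdeg i]
    have hsummand : ∀ k : Fin n, d.Lmat i k * (companion n p)ᵀ k j
        = (if k = (⟨n - 1, hn1⟩ : Fin n) then d.Lmat i k * (-(p.coeff (j : ℕ))) else 0)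
          + (if (j : ℕ) = (k : ℕ) + 1 then d.Lmat i k else 0) := by
      intro k
      simp only [Matrix.transpose_apply, companion, Matrix.of_apply]
      by_cases h1 : (k : ℕ) = n - 1
      · have hk : k = (⟨n - 1, hn1⟩ : Fin n) := Fin.ext h1
        rw [if_pos h1, if_pos hk,
          if_neg (show ¬ (j : ℕ) = (k : ℕ) + 1 by have := j.isLt; omega)]
        ring
      · have hk : ¬ k = (⟨n - 1, hn1⟩ : Fin n) := by
          simp only [Fin.ext_iff, Fin.val_mk]; omega
        rw [if_neg h1, if_neg hk, zero_add]
        by_cases h2 : (j : ℕ) = (k : ℕ) + 1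
        · rw [if_pos h2, if_pos h2, mul_one]
        · rw [if_neg h2, if_neg h2, mul_zero]
    rw [Finset.sum_congr rfl (fun k _ => hsummand k), Finset.sum_add_distrib]
    have T1 : (∑ k : Fin n, if k = (⟨n - 1, hn1⟩ : Fin n) then
        d.Lmat i k * (-(p.coeff (j : ℕ))) else 0)
        = d.Lmat i ⟨n - 1, hn1⟩ * (-(p.coeff (j : ℕ))) := by
      rw [Finset.sum_ite_eq' Finset.univ]; simp
    have T2 : (∑ k : Fin n, if (j : ℕ) = (k : ℕ) + 1 then d.Lmat i k else 0)
        = if (j : ℕ) = 0 then 0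
          else d.c (i : ℕ) * (d.P (n - (i : ℕ))).coeff ((j : ℕ) - 1) := by
      by_cases hj : (j : ℕ) = 0
      · rw [if_pos hj]
        exact Finset.sum_eq_zero fun k _ => if_neg (by omega)
      · rw [if_neg hj]
        have he : ∀ k : Fin n, ((j : ℕ) = (k : ℕ) + 1)
            = (k = (⟨(j : ℕ) - 1, by have := j.isLt; omega⟩ : Fin n)) := by
          intro k; simp [Fin.ext_iff]; omega
        simp_rw [he]
        rw [Finset.sum_ite_eq' Finset.univ]
        simp [SRemSData.Lmat]
    rw [T1, T2]
    have hcoef : (d.P (n - (i : ℕ))).coeff (n - 1) = if (i : ℕ) = n - 1 then 1 else 0 := by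
      have hm := d.hmonic (n - (i : ℕ)) (by omega)
      have hd := d.hdeg (n - (i : ℕ)) (by omega)
      have e : n - (n - (i : ℕ)) = (i : ℕ) := by have := i.isLt; omega
      rw [e] at hd
      by_cases hin : (i : ℕ) = n - 1
      · have h1 := hm.coeff_natDegree
        rw [hd] at h1
        rw [if_pos hin, ← hin]; exact h1
      · rw [if_neg hin]
        exact Polynomial.coeff_eq_zero_of_natDegree_lt (by rw [hd]; have := i.isLt; omega)
    rw [Polynomial.coeff_sub, Polynomial.coeff_C_mul]
    have hXP : (Polynomial.X * d.P (n - (i : ℕ))).coeff (j : ℕ)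
        = if (j : ℕ) = 0 then 0 else (d.P (n - (i : ℕ))).coeff ((j : ℕ) - 1) := by
      rcases Nat.eq_zero_or_pos (j : ℕ) with hj | hj
      · rw [hj]
        simp [Polynomial.mul_coeff_zero]
      · obtain ⟨m, hm⟩ : ∃ m, (j : ℕ) = m + 1 := ⟨(j : ℕ) - 1, by omega⟩
        rw [hm, Polynomial.coeff_X_mul, if_neg (by omega)]
        simp
    rw [hXP]
    have hite : (if (i : ℕ) = n - 1 then Polynomial.C (d.c (i : ℕ)) * p else 0).coeff (j : ℕ)
        = if (i : ℕ) = n - 1 then d.c (i : ℕ) * p.coeff (j : ℕ) else 0 := by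
      split_ifs <;> simp [Polynomial.coeff_C_mul]
    rw [hite]
    simp only [SRemSData.Lmat, Matrix.of_apply, Fin.val_mk]
    rw [hcoef]
    split_ifs <;> ring
  refine ⟨d.Lmat, hunit, hlow, ?_⟩
  rw [← hcomm, Matrix.mul_assoc,
    Matrix.mul_nonsing_inv _ (d.Lmat.isUnit_iff_isUnit_det.mp hunit), Matrix.mul_one]

end SRemSData

/-- Let `p` and `q` be monic real polynomials of respective degrees `n` and `n−1` such
that `SRemS(p,q)` has no degree breakdown.  Then there exists an invertible lower
triangular matrix `L` such that `Td(p,q) = L·C_pᵀ·L⁻¹`. -/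
theorem stmt_4 (n : ℕ) (hn : 1 ≤ n) (p q : Polynomial ℝ)
    (hp : p.Monic) (hpdeg : p.natDegree = n)
    (hq : q.Monic) (hqdeg : q.natDegree = n - 1)
    (d : SRemSData n p q) :
    ∃ L : Matrix (Fin n) (Fin n) ℝ, IsUnit L ∧ (∀ i j : Fin n, i < j → L i j = 0) ∧
      d.td = L * (companion n p)ᵀ * L⁻¹ := by
  exact d.main hn hp hpdeg
end

section
/- Let p be a monic real polynomial of degree n and let L ∈ ℝ^{n×n} be a lower triangular matrix such that L·C_p^T = C_p^T·L. Then L = λ·Id_n for some λ ∈ ℝ. -/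
open Polynomial Matrix

/-- If `p` is monic of degree `n` and `L` is a lower triangular matrix commuting with
`C_pᵀ`, then `L = λ·Id` for some real `λ`. -/
theorem stmt_5 (n : ℕ) (p : Polynomial ℝ) (hp : p.Monic) (hpdeg : p.natDegree = n)
    (L : Matrix (Fin n) (Fin n) ℝ) (hL : ∀ i j : Fin n, i < j → L i j = 0)
    (hcomm : L * (companion n p)ᵀ = (companion n p)ᵀ * L) :
    ∃ lam : ℝ, L = lam • (1 : Matrix (Fin n) (Fin n) ℝ) := by
  rcases Nat.eq_zero_or_pos n with h0 | hn
  · exact ⟨0, by subst h0; ext i; exact i.elim0⟩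
  refine ⟨L ⟨0, hn⟩ ⟨0, hn⟩, ?_⟩
  -- key shift relation
  have key : ∀ (i j : Fin n) (hi : (i : ℕ) + 1 < n),
      L ⟨(i : ℕ) + 1, hi⟩ j =
        if hj : 1 ≤ (j : ℕ) then L i ⟨(j : ℕ) - 1, by omega⟩ else 0 := by
    intro i j hi
    have h := congrFun (congrFun hcomm i) j
    simp only [Matrix.mul_apply, Matrix.transpose_apply, companion, Matrix.of_apply] at h
    have hine : (i : ℕ) ≠ n - 1 := by omega
    have hrhs : ∑ k : Fin n, (if (i : ℕ) = n - 1 then -p.coeff (k : ℕ)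
        else if (k : ℕ) = (i : ℕ) + 1 then 1 else 0) * L k j
        = L ⟨(i : ℕ) + 1, hi⟩ j := by
      rw [Finset.sum_eq_single (⟨(i : ℕ) + 1, hi⟩ : Fin n)]
      · simp [hine]
      · intro b _ hb
        have : (b : ℕ) ≠ (i : ℕ) + 1 := fun hc => hb (Fin.ext hc)
        simp [hine, this]
      · simp
    rw [hrhs] at h
    rw [← h]
    by_cases hj : 1 ≤ (j : ℕ)
    · rw [dif_pos hj]
      have hj1 : (j : ℕ) - 1 < n := by omega
      rw [Finset.sum_eq_single (⟨(j : ℕ) - 1, hj1⟩ : Fin n)]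
      · have h1 : ((j : ℕ) - 1 : ℕ) ≠ n - 1 := by omega
        have h2 : (j : ℕ) = ((j : ℕ) - 1) + 1 := by omega
        simp [h1, ← h2]
      · intro b _ hb
        have hbne : (b : ℕ) ≠ (j : ℕ) - 1 := fun hc => hb (Fin.ext hc)
        by_cases hbl : (b : ℕ) = n - 1
        · have : L i b = 0 := hL i b (by
            have : (i : ℕ) < (b : ℕ) := by omega
            exact this)
          simp [this]
        · have : (j : ℕ) ≠ (b : ℕ) + 1 := by omega
          simp [hbl, this]
      · simp
    · rw [dif_neg hj]
      have hj0 : (j : ℕ) = 0 := by omega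
      apply Finset.sum_eq_zero
      intro b _
      by_cases hbl : (b : ℕ) = n - 1
      · have : L i b = 0 := hL i b (by
          have : (i : ℕ) < (b : ℕ) := by omega
          exact this)
        simp [this]
      · have : (j : ℕ) ≠ (b : ℕ) + 1 := by omega
        simp [hbl, this]
  have main : ∀ (a : ℕ) (ha : a < n) (b : Fin n),
      L ⟨a, ha⟩ b = if a = (b : ℕ) then L ⟨0, hn⟩ ⟨0, hn⟩ else 0 := by
    intro a
    induction a with
    | zero =>
      intro ha b
      by_cases hb : (b : ℕ) = 0
      · have : b = ⟨0, hn⟩ := Fin.ext hb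
        simp [this]
      · rw [if_neg (by omega)]
        exact hL _ b (by
          show (0 : ℕ) < (b : ℕ)
          omega)
    | succ a ih =>
      intro ha b
      have ha' : a < n := by omega
      have hkey := key ⟨a, ha'⟩ b ha
      rw [hkey]
      by_cases hb : 1 ≤ (b : ℕ)
      · rw [dif_pos hb, ih ha' _]
        simp only
        split_ifs with h1 h2 h2
        · rfl
        · omega
        · omega
        · rfl
      · rw [dif_neg hb, if_neg (by omega)]
  ext i j
  have := main i.1 i.2 j
  simp only [Fin.eta] at this
  rw [this]
  simp [Matrix.one_apply, Fin.ext_iff]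
end

section
/- Let Td ∈ ℝ^{n×n} be a tridiagonal matrix whose first principal diagonals are non-singular, and let p(x) = det(x·Id_n − Td) be its characteristic polynomial. Then there exists an invertible lower triangular matrix L ∈ ℝ^{n×n} with Td = L·C_p^T·L^{−1}; moreover, L is unique up to multiplication by a nonzero real scalar: if L_1, L_2 are invertible lower triangular with L_1·C_p^T·L_1^{−1} = L_2·C_p^T·L_2^{−1} = Td, then L_1 = λ·L_2 for some nonzero λ ∈ ℝ. -/
/-!
Let `M` be the matrix whose rows are `e₀ᵀ Tdⁱ` for `i < n`. Since `Td` vanishes above its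
superdiagonal and its superdiagonal entries are nonzero, `(Tdⁱ)₀ⱼ` vanishes for `j > i` and not for
`j = i`, so `M` is lower triangular and invertible. Multiplying by `Td` shifts the rows of `M` up
by one, and the new last row `e₀ᵀ Tdⁿ` is, by Cayley–Hamilton, the combination of the rows of `M`
given by the last row of `C_pᵀ`; thus `M Td = C_pᵀ M` and `L = M⁻¹` works.
For uniqueness, `K = L₂⁻¹ L₁` is lower triangular and commutes with `C_pᵀ`; comparing the rows of
`K C_pᵀ = C_pᵀ K` shows inductively that row `i` of `K` is `K₀₀ eᵢᵀ`, hence `L₁ = K₀₀ L₂`.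
-/

open Polynomial Matrix

namespace Matrix

variable {R : Type*} {n : ℕ}

section LowerHessenberg

variable [Semiring R] {A : Matrix (Fin n) (Fin n) R}

theorem pow_apply_eq_zero_of_add_lt (hA : ∀ i j : Fin n, (i : ℕ) + 1 < j → A i j = 0) :
    ∀ (m : ℕ) {i j : Fin n}, (i : ℕ) + m < j → (A ^ m) i j = 0
  | 0, i, j, h => one_apply_ne (Fin.ne_of_val_ne (by omega))
  | m + 1, i, j, h => by
    rw [pow_succ, mul_apply]
    refine Finset.sum_eq_zero fun k _ => ?_
    by_cases hk : (i : ℕ) + m < k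
    · rw [pow_apply_eq_zero_of_add_lt hA m hk, zero_mul]
    · rw [hA k j (by omega), mul_zero]

theorem pow_apply_ne_zero_of_eq_add [NoZeroDivisors R] [Nontrivial R]
    (hA : ∀ i j : Fin n, (i : ℕ) + 1 < j → A i j = 0)
    (hsup : ∀ i j : Fin n, (j : ℕ) = (i : ℕ) + 1 → A i j ≠ 0) :
    ∀ (m : ℕ) {i j : Fin n}, (j : ℕ) = i + m → (A ^ m) i j ≠ 0
  | 0, i, j, h => by rw [Fin.ext h, pow_zero, one_apply_eq]; exact one_ne_zero
  | m + 1, i, j, h => by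
    let k : Fin n := ⟨i + m, by omega⟩
    rw [pow_succ, mul_apply, Finset.sum_eq_single k]
    · exact mul_ne_zero (pow_apply_ne_zero_of_eq_add hA hsup m rfl)
        (hsup k j (by simp [k]; omega))
    · intro b _ hb
      rcases lt_or_gt_of_ne (Fin.val_ne_of_ne hb) with hb | hb
      · rw [hA b j (by simp [k] at hb; omega), mul_zero]
      · rw [pow_apply_eq_zero_of_add_lt hA m hb, zero_mul]
    · simp

end LowerHessenberg

section Krylov

variable [Semiring R]

def krylovMatrix (A : Matrix (Fin n) (Fin n) R) (v : Fin n → R) : Matrix (Fin n) (Fin n) R :=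
  of fun i => v ᵥ* A ^ (i : ℕ)

theorem krylovMatrix_row (A : Matrix (Fin n) (Fin n) R) (v : Fin n → R) (i : Fin n) :
    krylovMatrix A v i = v ᵥ* A ^ (i : ℕ) :=
  rfl

variable [NeZero n]

theorem krylovMatrix_single_zero_apply (A : Matrix (Fin n) (Fin n) R) (i j : Fin n) :
    krylovMatrix A (Pi.single 0 1) i j = (A ^ (i : ℕ)) 0 j := by
  rw [krylovMatrix_row, single_one_vecMul, row]

theorem isLowerTriangular_krylovMatrix_single_zero {A : Matrix (Fin n) (Fin n) R}
    (hA : ∀ i j : Fin n, (i : ℕ) + 1 < j → A i j = 0) :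
    (krylovMatrix A (Pi.single 0 1)).IsLowerTriangular := fun i j h => by
  rw [krylovMatrix_single_zero_apply]
  exact pow_apply_eq_zero_of_add_lt hA _ (by simpa using h)

end Krylov

theorem det_krylovMatrix_single_zero_ne_zero [CommRing R] [IsDomain R] [NeZero n]
    {A : Matrix (Fin n) (Fin n) R}
    (hA : ∀ i j : Fin n, (i : ℕ) + 1 < j → A i j = 0)
    (hsup : ∀ i j : Fin n, (j : ℕ) = (i : ℕ) + 1 → A i j ≠ 0) :
    (krylovMatrix A (Pi.single 0 1)).det ≠ 0 := by
  rw [det_of_isLowerTriangular _ (isLowerTriangular_krylovMatrix_single_zero hA)]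
  refine Finset.prod_ne_zero_iff.2 fun i _ => ?_
  rw [krylovMatrix_single_zero_apply]
  exact pow_apply_ne_zero_of_eq_add hA hsup _ (by simp)

theorem pow_card_eq_neg_sum_charpoly_coeff_smul [CommRing R] [Nontrivial R]
    (A : Matrix (Fin n) (Fin n) R) :
    A ^ n = -∑ k : Fin n, A.charpoly.coeff k • A ^ (k : ℕ) := by
  have hdeg : A.charpoly.natDegree = n := by simp
  have h := aeval_self_charpoly A
  rw [A.charpoly_monic.as_sum, hdeg] at h
  simp only [map_add, map_pow, aeval_X, map_sum, map_mul, aeval_C, Algebra.algebraMap_eq_smul_one,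
    smul_mul_assoc, one_mul] at h
  rw [eq_neg_iff_add_eq_zero, Fin.sum_univ_eq_sum_range (fun k => A.charpoly.coeff k • A ^ k), h]

end Matrix

section Companion

variable {n : ℕ} {p : ℝ[X]}

theorem companion_transpose_row_of_lt {i : Fin n} (h : (i : ℕ) + 1 < n) :
    (companion n p)ᵀ i = Pi.single ⟨i + 1, h⟩ 1 := by
  ext j
  simp only [transpose_apply, companion, of_apply, Pi.single_apply, Fin.ext_iff]
  rw [if_neg (by omega)]

theorem companion_transpose_row_of_eq {i : Fin n} (h : (i : ℕ) + 1 = n) :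
    (companion n p)ᵀ i = fun j : Fin n => -p.coeff j := by
  ext j
  simp only [transpose_apply, companion, of_apply]
  rw [if_pos (by omega)]

theorem companion_transpose_mul_row_of_lt (M : Matrix (Fin n) (Fin n) ℝ) {i : Fin n}
    (h : (i : ℕ) + 1 < n) : ((companion n p)ᵀ * M) i = M ⟨i + 1, h⟩ := by
  rw [mul_apply_eq_vecMul, companion_transpose_row_of_lt h, single_one_vecMul, row]

theorem companion_transpose_mul_row_of_eq (M : Matrix (Fin n) (Fin n) ℝ) {i : Fin n}
    (h : (i : ℕ) + 1 = n) : ((companion n p)ᵀ * M) i = -∑ k : Fin n, p.coeff k • M k := by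
  rw [mul_apply_eq_vecMul, companion_transpose_row_of_eq h, vecMul_eq_sum]
  simp [neg_smul]

theorem krylovMatrix_mul_self (A : Matrix (Fin n) (Fin n) ℝ) (v : Fin n → ℝ) :
    krylovMatrix A v * A = (companion n A.charpoly)ᵀ * krylovMatrix A v := by
  funext i
  rw [mul_apply_eq_vecMul, krylovMatrix_row, vecMul_vecMul, ← pow_succ]
  rcases (Nat.succ_le_of_lt i.isLt).lt_or_eq with h | h
  · rw [companion_transpose_mul_row_of_lt _ h, krylovMatrix_row]
  · rw [companion_transpose_mul_row_of_eq _ h, show (i : ℕ) + 1 = n from h,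
      pow_card_eq_neg_sum_charpoly_coeff_smul]
    simp [krylovMatrix_row, vecMul_neg, vecMul_sum, vecMul_smul]

theorem exists_isLowerTriangular_conj_companion_transpose [NeZero n]
    {A : Matrix (Fin n) (Fin n) ℝ}
    (hA : ∀ i j : Fin n, (i : ℕ) + 1 < j → A i j = 0)
    (hsup : ∀ i j : Fin n, (j : ℕ) = (i : ℕ) + 1 → A i j ≠ 0) :
    ∃ L : Matrix (Fin n) (Fin n) ℝ, IsUnit L ∧ L.IsLowerTriangular ∧
      A = L * (companion n A.charpoly)ᵀ * L⁻¹ := by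
  set M := krylovMatrix A (Pi.single 0 1)
  have hdet : IsUnit M.det := (det_krylovMatrix_single_zero_ne_zero hA hsup).isUnit
  have : Invertible M := M.invertibleOfIsUnitDet hdet
  refine ⟨M⁻¹, M.isUnit_nonsing_inv_iff.2 ((isUnit_iff_isUnit_det M).2 hdet),
    blockTriangular_inv_of_blockTriangular (isLowerTriangular_krylovMatrix_single_zero hA), ?_⟩
  rw [nonsing_inv_nonsing_inv M hdet, mul_assoc, ← krylovMatrix_mul_self,
    nonsing_inv_mul_cancel_left M A hdet]

theorem eq_smul_one_of_commute_companion_transpose [NeZero n] {K : Matrix (Fin n) (Fin n) ℝ}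
    (hK : Commute K (companion n p)ᵀ) (h0 : ∀ j : Fin n, j ≠ 0 → K 0 j = 0) :
    K = K 0 0 • 1 := by
  have hrow : ∀ (m : ℕ) (hm : m < n), K ⟨m, hm⟩ = Pi.single ⟨m, hm⟩ (K 0 0) := by
    intro m
    induction m with
    | zero =>
      intro hm
      ext j
      by_cases hj : j = 0
      · subst hj; simp
      · simp [hj, h0 j hj]
    | succ m ih =>
      intro hm
      rw [← companion_transpose_mul_row_of_lt K (i := ⟨m, by omega⟩) hm, ← hK.eq,
        mul_apply_eq_vecMul, ih, single_vecMul, row, companion_transpose_row_of_lt hm,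
        ← Pi.single_smul, smul_eq_mul, mul_one]
  ext i j
  rw [hrow i i.isLt, Matrix.smul_apply, one_apply, Pi.single_apply]
  simp [Fin.ext_iff, eq_comm]

theorem eq_smul_of_conj_companion_transpose_eq [NeZero n] {L₁ L₂ : Matrix (Fin n) (Fin n) ℝ}
    (h₁ : IsUnit L₁) (hl₁ : L₁.IsLowerTriangular) (h₂ : IsUnit L₂) (hl₂ : L₂.IsLowerTriangular)
    (h : L₁ * (companion n p)ᵀ * L₁⁻¹ = L₂ * (companion n p)ᵀ * L₂⁻¹) :
    ∃ lam : ℝ, lam ≠ 0 ∧ L₁ = lam • L₂ := by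
  have : Invertible L₁ := h₁.invertible
  have : Invertible L₂ := h₂.invertible
  set C := (companion n p)ᵀ
  set K := L₂⁻¹ * L₁
  have hK : Commute K C := calc
    K * C = L₂⁻¹ * (L₁ * C * L₁⁻¹) * L₁ := by simp [K, mul_assoc]
    _ = L₂⁻¹ * (L₂ * C * L₂⁻¹) * L₁ := by rw [h]
    _ = C * K := by simp [K, mul_assoc]
  have hKl : K.IsLowerTriangular := (blockTriangular_inv_of_blockTriangular hl₂).mul hl₁
  have hKs := eq_smul_one_of_commute_companion_transpose hK
    fun j hj => hKl (Fin.pos_iff_ne_zero.2 hj)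
  refine ⟨K 0 0, fun hk => ?_, ?_⟩
  · have hKu : IsUnit K := (L₂.isUnit_nonsing_inv_iff.2 h₂).mul h₁
    rw [hKs, hk, zero_smul] at hKu
    exact not_isUnit_zero hKu
  · calc L₁ = L₂ * K := (mul_inv_cancel_left_of_invertible L₂ L₁).symm
      _ = L₂ * (K 0 0 • 1) := congrArg (L₂ * ·) hKs
      _ = K 0 0 • L₂ := by rw [Matrix.mul_smul, mul_one]

end Companion

theorem stmt_6_general (n : ℕ) (Td : Matrix (Fin n) (Fin n) ℝ)
    (htri : ∀ i j : Fin n, ((i : ℕ) + 2 ≤ (j : ℕ) ∨ (j : ℕ) + 2 ≤ (i : ℕ)) → Td i j = 0)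
    (hsup : ∀ i j : Fin n, (j : ℕ) = (i : ℕ) + 1 → Td i j ≠ 0)
    (p : Polynomial ℝ) (hp : p = Td.charpoly) :
    (∃ L : Matrix (Fin n) (Fin n) ℝ, IsUnit L ∧ (∀ i j : Fin n, i < j → L i j = 0) ∧
        Td = L * (companion n p)ᵀ * L⁻¹) ∧
      ∀ L₁ L₂ : Matrix (Fin n) (Fin n) ℝ,
        IsUnit L₁ → (∀ i j : Fin n, i < j → L₁ i j = 0) →
          Td = L₁ * (companion n p)ᵀ * L₁⁻¹ →
        IsUnit L₂ → (∀ i j : Fin n, i < j → L₂ i j = 0) →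
          Td = L₂ * (companion n p)ᵀ * L₂⁻¹ →
        ∃ lam : ℝ, lam ≠ 0 ∧ L₁ = lam • L₂ := by
  obtain rfl | hn := n.eq_zero_or_pos
  · exact ⟨⟨1, isUnit_one, fun i => i.elim0, Subsingleton.elim _ _⟩,
      fun _ _ _ _ _ _ _ _ => ⟨1, one_ne_zero, Subsingleton.elim _ _⟩⟩
  have : NeZero n := ⟨hn.ne'⟩
  subst hp
  obtain ⟨L, hLu, hLl, hL⟩ :=
    exists_isLowerTriangular_conj_companion_transpose (fun i j h => htri i j (.inl h)) hsup
  refine ⟨⟨L, hLu, fun i j h => hLl h, hL⟩, fun L₁ L₂ h₁ hl₁ e₁ h₂ hl₂ e₂ => ?_⟩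
  exact eq_smul_of_conj_companion_transpose_eq h₁ (fun i j h => hl₁ i j h) h₂
    (fun i j h => hl₂ i j h) (e₁.symm.trans e₂)

/-- Let `Td` be a tridiagonal matrix whose first principal diagonals are non-singular,
and let `p = det(x·Id − Td)` be its characteristic polynomial.  Then there is an
invertible lower triangular `L` with `Td = L·C_pᵀ·L⁻¹`, and `L` is unique up to a
nonzero scalar multiple. -/
theorem stmt_6 (n : ℕ) (Td : Matrix (Fin n) (Fin n) ℝ)
    (htri : ∀ i j : Fin n, ((i : ℕ) + 2 ≤ (j : ℕ) ∨ (j : ℕ) + 2 ≤ (i : ℕ)) → Td i j = 0)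
    (hsub : ∀ i j : Fin n, (i : ℕ) = (j : ℕ) + 1 → Td i j ≠ 0)
    (hsup : ∀ i j : Fin n, (j : ℕ) = (i : ℕ) + 1 → Td i j ≠ 0)
    (p : Polynomial ℝ) (hp : p = Td.charpoly) :
    (∃ L : Matrix (Fin n) (Fin n) ℝ, IsUnit L ∧ (∀ i j : Fin n, i < j → L i j = 0) ∧
        Td = L * (companion n p)ᵀ * L⁻¹) ∧
      ∀ L₁ L₂ : Matrix (Fin n) (Fin n) ℝ,
        IsUnit L₁ → (∀ i j : Fin n, i < j → L₁ i j = 0) →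
          Td = L₁ * (companion n p)ᵀ * L₁⁻¹ →
        IsUnit L₂ → (∀ i j : Fin n, i < j → L₂ i j = 0) →
          Td = L₂ * (companion n p)ᵀ * L₂⁻¹ →
        ∃ lam : ℝ, lam ≠ 0 ∧ L₁ = lam • L₂ :=
  stmt_6_general n Td htri hsup p hp
end

section
/- Let p be a monic real polynomial of degree n, let N_k = Trace(C_p^k) for k ≥ 0 (the k-th Newton sum of the roots of p), and let Newt_p(n) = (N_{i+j})_{0≤i,j≤n−1} ∈ ℝ^{n×n}. Then Newt_p(n)·C_p = C_p^T·Newt_p(n). -/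
/-!
The Hankel matrix `N = (N_{i+j})` is symmetric, so `N C = Cᵀ N = (N C)ᵀ` amounts to the symmetry
of `N C`. As `C e_j = e_{j+1}` for `j < n - 1`, column `j` of `N C` is column `j + 1` of `N`; for
the last column, `(N C)_{i,n-1} = -∑ a_k N_{i+k}` equals `N_{i+n}` by the Newton recurrence, which
is the trace of `C^i` times the Cayley–Hamilton identity `C^n = -∑ a_k C^k`. That identity is
checked on the cyclic vector `e_0`, whose iterates `C^k e_0 = e_k` span.
-/

open Polynomial Matrix BigOperators Finset

/-- `N_k = Trace(C_p^k)`, the `k`-th Newton sum of the roots of `p`. -/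
noncomputable def newtonSum (n : ℕ) (p : Polynomial ℝ) (k : ℕ) : ℝ :=
  Matrix.trace (companion n p ^ k)

/-- `Newt_p(n) = (N_{i+j})_{0≤i,j≤n−1}`, the Hankel matrix of Newton sums. -/
noncomputable def newtMatrix (n : ℕ) (p : Polynomial ℝ) : Matrix (Fin n) (Fin n) ℝ :=
  Matrix.of fun i j : Fin n => newtonSum n p ((i : ℕ) + (j : ℕ))

section

variable {n : ℕ} (p : Polynomial ℝ)

namespace companion

theorem mulVec_single_of_succ_lt (j : Fin n) (hj : (j : ℕ) + 1 < n) :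
    companion n p *ᵥ Pi.single j 1 = Pi.single ⟨j + 1, hj⟩ 1 := by
  ext i
  simp only [mulVec_single_one, col_apply, companion, of_apply, Pi.single_apply, Fin.ext_iff]
  split_ifs <;> first | rfl | omega

theorem mulVec_single_last (j : Fin n) (hj : (j : ℕ) = n - 1) :
    companion n p *ᵥ Pi.single j 1 = fun i : Fin n => -p.coeff i := by
  ext i
  simp [companion, hj]

theorem pow_mulVec_single_zero [NeZero n] (k : ℕ) (hk : k < n) :
    companion n p ^ k *ᵥ Pi.single 0 1 = Pi.single ⟨k, hk⟩ 1 := by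
  induction k with
  | zero => rw [pow_zero, one_mulVec]; rfl
  | succ k ih =>
    rw [pow_succ', ← mulVec_mulVec, ih (by omega), mulVec_single_of_succ_lt]

theorem pow_self_mulVec_single_zero [NeZero n] :
    companion n p ^ n *ᵥ Pi.single 0 1 = fun i : Fin n => -p.coeff i := by
  have hn : n - 1 + 1 = n := Nat.sub_add_cancel NeZero.one_le
  rw [← congrArg (companion n p ^ ·) hn, pow_succ', ← mulVec_mulVec,
    pow_mulVec_single_zero p _ (by omega), mulVec_single_last p _ rfl]

theorem pow_eq_neg_sum :
    companion n p ^ n = -∑ k ∈ range n, p.coeff k • companion n p ^ k := by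
  rw [eq_neg_iff_add_eq_zero]
  refine ext_of_mulVec_single fun j => ?_
  have : NeZero n := NeZero.of_pos j.pos
  have h_zero : (companion n p ^ n + ∑ k ∈ range n, p.coeff k • companion n p ^ k) *ᵥ
      Pi.single 0 1 = 0 := by
    rw [← Fin.sum_univ_eq_sum_range (fun k => p.coeff k • companion n p ^ k)]
    have h_basis (k : Fin n) : companion n p ^ (k : ℕ) *ᵥ Pi.single 0 1 = Pi.single k 1 :=
      pow_mulVec_single_zero p k k.isLt
    simp only [add_mulVec, sum_mulVec, smul_mulVec, h_basis, pow_self_mulVec_single_zero]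
    ext i
    simp [Pi.single_apply]
  have h_comm : Commute (companion n p ^ (j : ℕ))
      (companion n p ^ n + ∑ k ∈ range n, p.coeff k • companion n p ^ k) :=
    (Commute.pow_pow_self _ _ _).add_right <|
      Commute.sum_right _ _ _ fun k _ => (Commute.pow_pow_self _ _ _).smul_right _
  rw [← pow_mulVec_single_zero p j j.isLt, mulVec_mulVec, ← h_comm.eq, ← mulVec_mulVec,
    h_zero, mulVec_zero, zero_mulVec]

end companion

theorem newtonSum_add_self (m : ℕ) :
    newtonSum n p (m + n) = -∑ k ∈ range n, p.coeff k * newtonSum n p (m + k) := by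
  simp only [newtonSum, pow_add, companion.pow_eq_neg_sum, mul_neg, mul_sum, mul_smul_comm,
    trace_neg, trace_sum, trace_smul, smul_eq_mul]

theorem newtMatrix_transpose : (newtMatrix n p)ᵀ = newtMatrix n p := by
  ext i j
  simp [newtMatrix, add_comm]

theorem newtMatrix_mul_companion_apply (i j : Fin n) :
    (newtMatrix n p * companion n p) i j = newtonSum n p (i + j + 1) := by
  rw [← col_apply (newtMatrix n p * companion n p), ← mulVec_single_one, ← mulVec_mulVec]
  by_cases hj : (j : ℕ) + 1 < n
  · rw [companion.mulVec_single_of_succ_lt p j hj, mulVec_single_one]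
    rfl
  · have hj : (j : ℕ) + 1 = n := by omega
    rw [companion.mulVec_single_last p j (by omega), add_assoc, hj, newtonSum_add_self,
      ← Fin.sum_univ_eq_sum_range (fun k => p.coeff k * newtonSum n p (i + k))]
    simp [mulVec, dotProduct, newtMatrix, mul_comm]

end

theorem stmt_9_general (n : ℕ) (p : Polynomial ℝ) :
    newtMatrix n p * companion n p = (companion n p)ᵀ * newtMatrix n p :=
  calc newtMatrix n p * companion n p = (newtMatrix n p * companion n p)ᵀ := by
        ext i j
        simp only [transpose_apply, newtMatrix_mul_companion_apply, add_comm (i : ℕ)]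
    _ = (companion n p)ᵀ * newtMatrix n p := by rw [transpose_mul, newtMatrix_transpose]

/-- The Hankel matrix of Newton sums of the roots of a monic polynomial `p` of degree
`n` satisfies the intertwining relation `Newt_p(n)·C_p = C_pᵀ·Newt_p(n)`. -/
theorem stmt_9 (n : ℕ) (p : Polynomial ℝ) (hp : p.Monic) (hpdeg : p.natDegree = n) :
    newtMatrix n p * companion n p = (companion n p)ᵀ * newtMatrix n p :=
  stmt_9_general n p
end

section
/- Let p(x) = x^n + a_{n−1}x^{n−1} + ⋯ + a_0 be a monic real polynomial of degree n and let q ∈ ℝ[x] with deg q < n. Then Bez_C(p,q) = q(C_p)·P_CH (Barnett's formula). -/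
/-!
Write `Δf = (f(x) − f(y))/(x − y)`, whose coefficient of `x^i y^j` is `f_{i+j+1}`. Then
`Bez(p,q) = q(x)·Δp − p(x)·Δq`, so the coefficient of `y^j` in `Bez(p,q)` is the polynomial
`q·D_j p − p·D_j q` in `x`, where `D_j f = Σ_k f_{k+j+1} x^k = divX^[j+1] f`. Since the Bezoutian
has `x`-degree `< n`, this is the remainder of `q·D_j p` modulo `p`. In the basis `1, x, …, x^{n-1}`
of `ℝ[x]/(p)` multiplication by `x` has matrix `C_p`, so multiplication by `q` has matrix `q(C_p)`;
and the coordinates of `D_j p` are the `j`-th column of `P_CH`.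
-/

open Polynomial Matrix BigOperators Finset

/-- The Bezoutian `Bez(p,q)(x,y) = (q(y)p(x) − q(x)p(y))/(x−y)`, as an element of
`ℝ[y][x]` (inner variable `y`, outer variable `x`); the division is exact, and is
performed via `divByMonic` by the monic (in `x`) polynomial `x − y`. -/
noncomputable def bezPoly (p q : Polynomial ℝ) : Polynomial (Polynomial ℝ) :=
  (Polynomial.C q * p.map (Polynomial.C : ℝ →+* Polynomial ℝ)
      - q.map (Polynomial.C : ℝ →+* Polynomial ℝ) * Polynomial.C p) /ₘ
    (Polynomial.X - Polynomial.C Polynomial.X)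

/-- `Bez_C(p,q)`: the `n×n` matrix whose `(i,j)`-entry is the coefficient of
`x^i·y^j` in `Bez(p,q)`. -/
noncomputable def bezMatrix (n : ℕ) (p q : Polynomial ℝ) : Matrix (Fin n) (Fin n) ℝ :=
  Matrix.of fun i j : Fin n => ((bezPoly p q).coeff (i : ℕ)).coeff (j : ℕ)

/-- `P_CH`: the Hankel matrix with `(i,j)`-entry `a_{i+j+1}` (with `a_n = 1`,
`a_k = 0` for `k > n`), i.e. the change of basis matrix from the canonical basis to
the Horner basis of `ℝ[x]/(p)`. -/
noncomputable def pCH (n : ℕ) (p : Polynomial ℝ) : Matrix (Fin n) (Fin n) ℝ :=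
  Matrix.of fun i j : Fin n => p.coeff ((i : ℕ) + (j : ℕ) + 1)

section DifferenceQuotient

variable {R : Type*} [CommRing R]

/-- `(f(x) − f(y))/(x − y)` in `R[y][x]`, i.e. with `x` the outer variable. -/
noncomputable def differenceQuotient (f : R[X]) : R[X][X] :=
  ∑ m ∈ range (f.natDegree + 1), ∑ i ∈ range m, monomial i (monomial (m - 1 - i) (f.coeff m))

theorem differenceQuotient_mul_X_sub_C_X (f : R[X]) :
    differenceQuotient f * (X - C X) = f.map C - C f := by
  conv_rhs => rw [f.as_sum_range_C_mul_X_pow]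
  simp only [differenceQuotient, Finset.sum_mul, Polynomial.map_sum, map_sum,
    ← Finset.sum_sub_distrib]
  refine Finset.sum_congr rfl fun m _ => ?_
  simp only [← C_mul_X_pow_eq_monomial, Polynomial.map_mul, Polynomial.map_pow, map_C, map_X,
    map_mul, map_pow, mul_assoc, ← Finset.mul_sum, ← mul_sub]
  rw [← geom_sum₂_mul]
  simp only [Finset.sum_mul, Finset.mul_sum]
  refine Finset.sum_congr rfl fun i _ => ?_
  ring

theorem coeff_coeff_differenceQuotient (f : R[X]) (i j : ℕ) :
    ((differenceQuotient f).coeff i).coeff j = f.coeff (i + j + 1) := by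
  simp only [differenceQuotient, finsetSum_coeff, coeff_monomial]
  have hterm : ∀ m, ∑ b ∈ range m, (if b = i then monomial (m - 1 - b) (f.coeff m) else 0).coeff j
      = if m = i + j + 1 then f.coeff m else 0 := by
    intro m
    simp only [apply_ite (coeff · j), coeff_zero, Finset.sum_ite_eq', Finset.mem_range,
      coeff_monomial]
    split_ifs <;> first | rfl | omega
  rw [Finset.sum_congr rfl fun m _ => hterm m, Finset.sum_ite_eq', ite_eq_left_iff,
    Finset.mem_range]
  exact fun h => (coeff_eq_zero_of_natDegree_lt (by omega)).symm

theorem coeff_divX_iterate (f : R[X]) (m k : ℕ) : (divX^[m] f).coeff k = f.coeff (k + m) := by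
  induction m generalizing k with
  | zero => rfl
  | succ m ih => rw [Function.iterate_succ_apply', coeff_divX, ih, add_right_comm, add_assoc]

theorem natDegree_divX_iterate (f : R[X]) (m : ℕ) : (divX^[m] f).natDegree = f.natDegree - m := by
  induction m with
  | zero => rfl
  | succ m ih => rw [Function.iterate_succ_apply', natDegree_divX_eq_natDegree_tsub_one, ih,
      Nat.sub_sub]

theorem coeff_coeff_map_C_mul_differenceQuotient (f g : R[X]) (i j : ℕ) :
    ((f.map C * differenceQuotient g).coeff i).coeff j = (f * divX^[j + 1] g).coeff i := by
  rw [coeff_mul, coeff_mul, finsetSum_coeff]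
  refine Finset.sum_congr rfl fun ab _ => ?_
  rw [coeff_map, coeff_C_mul, coeff_coeff_differenceQuotient, coeff_divX_iterate, add_assoc]

end DifferenceQuotient

theorem bezPoly_eq (p q : ℝ[X]) :
    bezPoly p q = q.map C * differenceQuotient p - p.map C * differenceQuotient q := by
  have hnum : C q * p.map C - q.map C * C p =
      (X - C X) * (q.map C * differenceQuotient p - p.map C * differenceQuotient q) := by
    linear_combination p.map C * differenceQuotient_mul_X_sub_C_X q -
      q.map C * differenceQuotient_mul_X_sub_C_X p
  rw [bezPoly, hnum, mul_divByMonic_cancel_left _ (monic_X_sub_C _)]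

theorem natDegree_bezPoly_le (p q : ℝ[X]) :
    (bezPoly p q).natDegree ≤ max p.natDegree q.natDegree - 1 := by
  rw [bezPoly, natDegree_divByMonic _ (monic_X_sub_C _), natDegree_X_sub_C]
  refine Nat.sub_le_sub_right ((natDegree_sub_le _ _).trans (max_le_max ?_ ?_)) 1
  · exact natDegree_C_mul_le _ _ |>.trans natDegree_map_le
  · exact natDegree_mul_C_le _ _ |>.trans natDegree_map_le

theorem coeff_coeff_bezPoly (p q : ℝ[X]) (i j : ℕ) :
    ((bezPoly p q).coeff i).coeff j = (q * divX^[j + 1] p - p * divX^[j + 1] q).coeff i := by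
  rw [bezPoly_eq, coeff_sub, coeff_sub, coeff_sub, coeff_coeff_map_C_mul_differenceQuotient,
    coeff_coeff_map_C_mul_differenceQuotient]

theorem bezMatrix_apply_eq_coeff_modByMonic {p q : ℝ[X]} (hp : p.Monic)
    (hq : q.natDegree ≤ p.natDegree) (i j : Fin p.natDegree) :
    bezMatrix p.natDegree p q i j = ((q * divX^[j + 1] p) %ₘ p).coeff i := by
  have hmod : (q * divX^[j + 1] p) %ₘ p = q * divX^[j + 1] p - p * divX^[j + 1] q := by
    refine (div_modByMonic_unique (divX^[j + 1] q) _ hp ⟨by ring, ?_⟩).2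
    rw [degree_eq_natDegree hp.ne_zero, degree_lt_iff_coeff_zero]
    intro m hm
    have hbez : (bezPoly p q).natDegree < m := by
      have hle := natDegree_bezPoly_le p q
      rw [max_eq_left hq] at hle
      have := j.pos
      omega
    rw [← coeff_coeff_bezPoly, coeff_eq_zero_of_natDegree_lt hbez, coeff_zero]
  rw [hmod, ← coeff_coeff_bezPoly]
  rfl

theorem pCH_apply_eq_coeff_modByMonic {p : ℝ[X]} (hp : p.Monic) (i j : Fin p.natDegree) :
    pCH p.natDegree p i j = ((divX^[j + 1] p) %ₘ p).coeff i := by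
  have hdeg : (divX^[j + 1] p).degree < p.degree :=
    degree_lt_degree (by rw [natDegree_divX_iterate]; omega)
  rw [(modByMonic_eq_self_iff hp).2 hdeg, coeff_divX_iterate, ← add_assoc]
  rfl

theorem leftMulMatrix_root_eq_companion {p : ℝ[X]} (hp : p.Monic) :
    Algebra.leftMulMatrix (AdjoinRoot.powerBasisAux' hp) (AdjoinRoot.root p) =
      companion p.natDegree p := by
  ext i j
  have hbasis : AdjoinRoot.powerBasisAux' hp j = AdjoinRoot.root p ^ (j : ℕ) :=
    (AdjoinRoot.powerBasis' hp).basis_eq_pow j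
  rw [Algebra.leftMulMatrix_eq_repr_mul, hbasis, ← pow_succ', ← AdjoinRoot.mk_X, ← map_pow,
    AdjoinRoot.powerBasisAux'_repr_apply_to_fun, AdjoinRoot.modByMonicHom_mk]
  have hdeg : p.degree = p.natDegree := degree_eq_natDegree hp.ne_zero
  simp only [companion, Matrix.of_apply]
  split_ifs with hj hi
  · have hmod : X ^ ((j : ℕ) + 1) %ₘ p = X ^ ((j : ℕ) + 1) - p := by
      refine (div_modByMonic_unique 1 _ hp ⟨by ring, ?_⟩).2
      rw [show (j : ℕ) + 1 = p.natDegree by omega]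
      have hXp : (X ^ p.natDegree : ℝ[X]).degree = p.degree := by rw [degree_X_pow, hdeg]
      exact hXp ▸ degree_sub_lt_left hXp (pow_ne_zero _ X_ne_zero)
        (by rw [leadingCoeff_X_pow, hp.leadingCoeff])
    rw [hmod, coeff_sub, coeff_X_pow, if_neg (by omega), zero_sub]
  all_goals
    rw [(modByMonic_eq_self_iff hp).2 (by rw [degree_X_pow, hdeg]; exact_mod_cast (by omega)),
      coeff_X_pow]
    simp [hi]

theorem aeval_companion_mulVec {p : ℝ[X]} (hp : p.Monic) (g f : ℝ[X]) :
    aeval (companion p.natDegree p) g *ᵥ (fun i : Fin p.natDegree => (f %ₘ p).coeff i) =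
      fun i : Fin p.natDegree => ((g * f) %ₘ p).coeff i := by
  rw [← leftMulMatrix_root_eq_companion hp, aeval_algHom_apply, AdjoinRoot.aeval_eq]
  exact Algebra.leftMulMatrix_mulVec_repr _ (AdjoinRoot.mk p g) (AdjoinRoot.mk p f)

theorem stmt_11_general (n : ℕ) (p q : Polynomial ℝ)
    (hp : p.Monic) (hpdeg : p.natDegree = n) (hq : q.degree < n) :
    bezMatrix n p q = Polynomial.aeval (companion n p) q * pCH n p := by
  subst hpdeg
  have hqp : q.natDegree ≤ p.natDegree := natDegree_le_iff_degree_le.mpr hq.le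
  ext i j
  calc bezMatrix p.natDegree p q i j = ((q * divX^[j + 1] p) %ₘ p).coeff i :=
        bezMatrix_apply_eq_coeff_modByMonic hp hqp i j
    _ = (aeval (companion p.natDegree p) q *ᵥ fun k => ((divX^[j + 1] p) %ₘ p).coeff k) i := by
        rw [aeval_companion_mulVec hp]
    _ = (aeval (companion p.natDegree p) q * pCH p.natDegree p) i j := by
        simp only [pCH_apply_eq_coeff_modByMonic hp, mul_apply, mulVec, dotProduct]

/-- Barnett's formula: for `p` monic of degree `n` and `deg q < n`,
`Bez_C(p,q) = q(C_p)·P_CH`. -/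
theorem stmt_11 (n : ℕ) (hn : 1 ≤ n) (p q : Polynomial ℝ)
    (hp : p.Monic) (hpdeg : p.natDegree = n) (hq : q.degree < n) :
    bezMatrix n p q = Polynomial.aeval (companion n p) q * pCH n p :=
  stmt_11_general n p q hp hpdeg hq
end

section
/- Let p(x) = x^n + a_{n−1}x^{n−1} + ⋯ + a_0 be a monic real polynomial of degree n and let q ∈ ℝ[x] with deg q < n. Then q(C_p) = P_CH^T · H_n(q/p). -/
open Polynomial Matrix BigOperators Finset

/-- The coefficients `(s_j)` of the expansion `q(x)/p(x) = Σ_{j≥0} s_j·x^{−j−1}` at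
infinity: `s_j` is the `j`-th coefficient of the formal power series
`t^{n−1}q(1/t) · (t^n p(1/t))⁻¹`. -/
noncomputable def hankelSeq (n : ℕ) (p q : Polynomial ℝ) : ℕ → ℝ := fun j =>
  PowerSeries.coeff (R := ℝ) j
    (((Polynomial.reflect (n - 1) q : Polynomial ℝ) : PowerSeries ℝ) *
      ((Polynomial.reflect n p : Polynomial ℝ) : PowerSeries ℝ)⁻¹)

/-- The Hankel matrix `H_n(q/p) = (s_{i+j})_{0≤i,j≤n−1}`. -/
noncomputable def hankelMat (n : ℕ) (p q : Polynomial ℝ) : Matrix (Fin n) (Fin n) ℝ :=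
  Matrix.of fun i j : Fin n => hankelSeq n p q ((i : ℕ) + (j : ℕ))

/-!
`C_p` is the matrix of multiplication by `x` on `ℝ[x]/(p)` in the basis `1, x, …, x^{n-1}`, so
column `j` of `q(C_p)` is the coefficient vector of `r = x^j q mod p`. Since `r/p` differs from
`x^j q/p` by a polynomial, `r/p = Σ_k s_{k+j} x^{-k-1}`, and comparing the coefficients of `x^i` in
`r = p · (r/p)` gives `r_i = Σ_k a_{k+i+1} s_{k+j}`, the `(i, j)` entry of `P_CHᵀ · H_n(q/p)`.
With `s` encoded as a formal power series, both comparisons are made after reversing the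
polynomials.
-/

lemma Polynomial.natDegree_le_pred_of_degree_lt {R : Type*} [Semiring R] {f : R[X]} {n : ℕ}
    (h : f.degree < n) : f.natDegree ≤ n - 1 :=
  natDegree_le_pred (natDegree_le_of_degree_le h.le) (coeff_eq_zero_of_degree_lt h)

lemma PowerSeries.coe_reflect_mul_inv_cancel {K : Type*} [Field K] {p : K[X]} {n : ℕ}
    (hp : p.coeff n ≠ 0) :
    ((p.reflect n : K[X]) : PowerSeries K) * ((p.reflect n : K[X]) : PowerSeries K)⁻¹ = 1 :=
  PowerSeries.mul_inv_cancel _ <| by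
    rwa [Polynomial.constantCoeff_coe, coeff_reflect, revAt_zero]

lemma Polynomial.Monic.coeff_eq_one_of_natDegree_eq {R : Type*} [Semiring R] {p : R[X]} {n : ℕ}
    (hp : p.Monic) (hpdeg : p.natDegree = n) : p.coeff n = 1 :=
  hpdeg ▸ hp.coeff_natDegree

lemma Polynomial.Monic.degree_modByMonic_lt_of_natDegree_eq {R : Type*} [Ring R] [Nontrivial R]
    {p : R[X]} {n : ℕ} (hp : p.Monic) (hpdeg : p.natDegree = n) (f : R[X]) :
    (f %ₘ p).degree < n := by
  simpa [degree_eq_natDegree hp.ne_zero, hpdeg] using degree_modByMonic_lt f hp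

lemma Polynomial.natDegree_X_pow_mul_divByMonic_le {R : Type*} [Ring R] {p q : R[X]} {n : ℕ}
    (hn : 1 ≤ n) (hp : p.Monic) (hpdeg : p.natDegree = n) (hq : q.degree < n) (j : ℕ) :
    ((X ^ (j + 1) * q) /ₘ p).natDegree ≤ j := by
  have hf : (X ^ (j + 1) * q).natDegree ≤ j + 1 + (n - 1) :=
    natDegree_mul_le.trans (add_le_add (natDegree_X_pow_le _) (natDegree_le_pred_of_degree_lt hq))
  rw [natDegree_divByMonic _ hp, hpdeg]
  omega

-- Reversal of the division `X ^ (j + 1) * q = p * m + r` at degree `n + j`.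
lemma Polynomial.reflect_eq_of_X_pow_mul_divByMonic {R : Type*} [Ring R] [Nontrivial R]
    {p q : R[X]} {n : ℕ} (hn : 1 ≤ n) (hp : p.Monic) (hpdeg : p.natDegree = n)
    (hq : q.degree < n) (j : ℕ) :
    q.reflect (n - 1) = p.reflect n * ((X ^ (j + 1) * q) /ₘ p).reflect j +
      ((X ^ (j + 1) * q) %ₘ p).reflect (n - 1) * X ^ (j + 1) := by
  set f := X ^ (j + 1) * q
  have hq' := natDegree_le_pred_of_degree_lt hq
  have hr := natDegree_le_pred_of_degree_lt (hp.degree_modByMonic_lt_of_natDegree_eq hpdeg f)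
  have h1 := reflect_mul (X ^ (j + 1) : R[X]) q (natDegree_X_pow_le _) hq'
  have h2 := reflect_mul p (f /ₘ p) hpdeg.le (natDegree_X_pow_mul_divByMonic_le hn hp hpdeg hq j)
  have h3 := reflect_mul (f %ₘ p) (1 : R[X]) (G := j + 1) hr (by simp)
  rw [reflect_monomial, revAt_le le_rfl, Nat.sub_self, pow_zero, one_mul] at h1
  rw [reflect_one, mul_one] at h3
  rw [← h1, ← h2, ← h3, show j + 1 + (n - 1) = n + j by omega,
    show n - 1 + (j + 1) = n + j by omega, ← reflect_add, add_comm (p * _), modByMonic_add_div]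

section HankelSeq

variable {n : ℕ} {p q : ℝ[X]}

lemma coeff_eq_sum_coeff_mul_hankelSeq (hp : p.Monic) (hpdeg : p.natDegree = n) (r : ℝ[X])
    {i : ℕ} (hi : i < n) :
    r.coeff i = ∑ k ∈ range n, p.coeff (k + i + 1) * hankelSeq n p r k := by
  set P : PowerSeries ℝ := ((p.reflect n : ℝ[X]) : PowerSeries ℝ)
  set Q : PowerSeries ℝ := ((r.reflect (n - 1) : ℝ[X]) : PowerSeries ℝ)
  have hQ : Q = Q * P⁻¹ * P := by
    rw [mul_assoc, mul_comm P⁻¹, PowerSeries.coe_reflect_mul_inv_cancel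
      (hp.coeff_eq_one_of_natDegree_eq hpdeg ▸ one_ne_zero), mul_one]
  have h := congrArg (PowerSeries.coeff (n - 1 - i)) hQ
  rw [Polynomial.coeff_coe, coeff_reflect, revAt_le (by omega),
    show n - 1 - (n - 1 - i) = i by omega, PowerSeries.coeff_mul,
    Finset.Nat.sum_antidiagonal_eq_sum_range_succ (fun a b => PowerSeries.coeff a (Q * P⁻¹) *
      PowerSeries.coeff b P)] at h
  rw [h, eq_comm]
  calc ∑ k ∈ range n, p.coeff (k + i + 1) * hankelSeq n p r k
      = ∑ k ∈ range (n - 1 - i + 1), p.coeff (k + i + 1) * hankelSeq n p r k := by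
        refine (sum_subset (range_subset_range.2 (by omega)) fun k hkn hk => ?_).symm
        rw [mem_range] at hkn hk
        rw [coeff_eq_zero_of_natDegree_lt (by omega), zero_mul]
    _ = _ := sum_congr rfl fun k hk => by
        rw [mem_range] at hk
        rw [mul_comm, Polynomial.coeff_coe, coeff_reflect, revAt_le (by omega),
          show n - (n - 1 - i - k) = k + i + 1 by omega]
        rfl

lemma hankelSeq_X_pow_mul_modByMonic (hn : 1 ≤ n) (hp : p.Monic) (hpdeg : p.natDegree = n)
    (hq : q.degree < n) (j k : ℕ) :
    hankelSeq n p ((X ^ j * q) %ₘ p) k = hankelSeq n p q (k + j) := by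
  obtain _ | j := j
  · rw [pow_zero, one_mul, add_zero, (modByMonic_eq_self_iff hp).2]
    rwa [degree_eq_natDegree hp.ne_zero, hpdeg]
  set f := X ^ (j + 1) * q
  set P : PowerSeries ℝ := ((p.reflect n : ℝ[X]) : PowerSeries ℝ)
  have hS : ((q.reflect (n - 1) : ℝ[X]) : PowerSeries ℝ) * P⁻¹ =
      (((f /ₘ p).reflect j : ℝ[X]) : PowerSeries ℝ) +
        (((f %ₘ p).reflect (n - 1) : ℝ[X]) : PowerSeries ℝ) * P⁻¹ *
          PowerSeries.X ^ (j + 1) := by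
    rw [reflect_eq_of_X_pow_mul_divByMonic hn hp hpdeg hq j, Polynomial.coe_add,
      Polynomial.coe_mul, Polynomial.coe_mul, Polynomial.coe_pow, coe_X, add_mul,
      mul_right_comm _ (PowerSeries.X ^ _), mul_right_comm P,
      PowerSeries.coe_reflect_mul_inv_cancel
        (hp.coeff_eq_one_of_natDegree_eq hpdeg ▸ one_ne_zero), one_mul]
  have hM : ((f /ₘ p).reflect j).coeff (k + (j + 1)) = 0 :=
    coeff_eq_zero_of_natDegree_lt <| natDegree_reflect_le.trans_lt <|
      max_lt (by omega) ((natDegree_X_pow_mul_divByMonic_le hn hp hpdeg hq j).trans_lt (by omega))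
  unfold hankelSeq
  rw [hS, map_add, coeff_coe, hM, zero_add, PowerSeries.coeff_mul_X_pow]

end HankelSeq

section Companion

variable {n : ℕ} {p : ℝ[X]}

lemma companion_mulVec_single {j : ℕ} (hj : j + 1 < n) :
    companion n p *ᵥ Pi.single ⟨j, by omega⟩ 1 = Pi.single ⟨j + 1, hj⟩ 1 := by
  ext i
  simp only [mulVec_single_one, col_apply, companion, of_apply, Pi.single_apply, Fin.ext_iff]
  grind

lemma companion_mulVec_single_last (hn : 1 ≤ n) :
    companion n p *ᵥ Pi.single ⟨n - 1, by omega⟩ 1 = -fun i : Fin n => p.coeff i := by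
  ext i
  simp [companion]

lemma companion_pow_mulVec_single_zero (hn : 1 ≤ n) (d : Fin n) :
    companion n p ^ (d : ℕ) *ᵥ Pi.single ⟨0, hn⟩ 1 = Pi.single d 1 := by
  obtain ⟨d, hd⟩ := d
  induction d with
  | zero => rw [pow_zero, one_mulVec]
  | succ d ih => rw [pow_succ', ← mulVec_mulVec, ih (by omega), companion_mulVec_single]

lemma companion_pow_self_mulVec_single_zero (hn : 1 ≤ n) :
    companion n p ^ n *ᵥ Pi.single ⟨0, hn⟩ 1 = -fun i : Fin n => p.coeff i := by
  rw [← mul_pow_sub_one (by omega : n ≠ 0), ← mulVec_mulVec,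
    companion_pow_mulVec_single_zero hn ⟨n - 1, by omega⟩, companion_mulVec_single_last hn]

lemma aeval_companion_mulVec_single_zero (hn : 1 ≤ n) {f : ℝ[X]} (hf : f.natDegree ≤ n) :
    aeval (companion n p) f *ᵥ Pi.single ⟨0, hn⟩ 1 =
      fun i : Fin n => f.coeff i - f.coeff n * p.coeff i := by
  rw [aeval_eq_sum_range' (Nat.lt_succ_of_le hf), sum_range_succ,
    ← Fin.sum_univ_eq_sum_range (fun d => f.coeff d • companion n p ^ d), add_mulVec,
    sum_mulVec]
  simp only [smul_mulVec, companion_pow_mulVec_single_zero,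
    companion_pow_self_mulVec_single_zero]
  ext i
  simp [Finset.sum_apply, Pi.single_apply, sub_eq_add_neg]

lemma aeval_companion_mulVec_single_zero_of_degree_lt (hn : 1 ≤ n) {r : ℝ[X]}
    (hr : r.degree < n) :
    aeval (companion n p) r *ᵥ Pi.single ⟨0, hn⟩ 1 = fun i : Fin n => r.coeff i := by
  rw [aeval_companion_mulVec_single_zero hn (natDegree_le_of_degree_le hr.le),
    coeff_eq_zero_of_degree_lt hr]
  simp

lemma aeval_companion_self_mulVec_single_zero (hn : 1 ≤ n) (hp : p.Monic)
    (hpdeg : p.natDegree = n) : aeval (companion n p) p *ᵥ Pi.single ⟨0, hn⟩ 1 = 0 := by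
  ext i
  simp [aeval_companion_mulVec_single_zero hn hpdeg.le, hp.coeff_eq_one_of_natDegree_eq hpdeg]

lemma aeval_companion_modByMonic_mulVec_single_zero (hn : 1 ≤ n) (hp : p.Monic)
    (hpdeg : p.natDegree = n) (f : ℝ[X]) :
    aeval (companion n p) (f %ₘ p) *ᵥ Pi.single ⟨0, hn⟩ 1 =
      aeval (companion n p) f *ᵥ Pi.single ⟨0, hn⟩ 1 := by
  conv_rhs => rw [← modByMonic_add_div f p, mul_comm p, map_add, map_mul, add_mulVec,
    ← mulVec_mulVec, aeval_companion_self_mulVec_single_zero hn hp hpdeg, mulVec_zero, add_zero]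

lemma aeval_companion_apply (hn : 1 ≤ n) (hp : p.Monic) (hpdeg : p.natDegree = n) (q : ℝ[X])
    (i j : Fin n) : aeval (companion n p) q i j = ((X ^ (j : ℕ) * q) %ₘ p).coeff i := by
  calc aeval (companion n p) q i j
      = (aeval (companion n p) q *ᵥ
          (companion n p ^ (j : ℕ) *ᵥ Pi.single ⟨0, hn⟩ 1)) i := by
        rw [companion_pow_mulVec_single_zero, mulVec_single_one, col_apply]
    _ = (aeval (companion n p) ((X ^ (j : ℕ) * q) %ₘ p) *ᵥ Pi.single ⟨0, hn⟩ 1) i := by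
        rw [aeval_companion_modByMonic_mulVec_single_zero hn hp hpdeg, mul_comm, map_mul, map_pow,
          aeval_X, mulVec_mulVec]
    _ = ((X ^ (j : ℕ) * q) %ₘ p).coeff i := by
        rw [aeval_companion_mulVec_single_zero_of_degree_lt hn
          (hp.degree_modByMonic_lt_of_natDegree_eq hpdeg _)]

end Companion

/-- For `p` monic of degree `n` and `deg q < n`, `q(C_p) = P_CHᵀ · H_n(q/p)`. -/
theorem stmt_12 (n : ℕ) (hn : 1 ≤ n) (p q : Polynomial ℝ)
    (hp : p.Monic) (hpdeg : p.natDegree = n) (hq : q.degree < n) :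
    Polynomial.aeval (companion n p) q = (pCH n p)ᵀ * hankelMat n p q := by
  ext i j
  rw [aeval_companion_apply hn hp hpdeg, coeff_eq_sum_coeff_mul_hankelSeq hp hpdeg _ i.isLt,
    mul_apply, ← Fin.sum_univ_eq_sum_range]
  refine sum_congr rfl fun k _ => ?_
  rw [hankelSeq_X_pow_mul_modByMonic hn hp hpdeg hq]
  rfl
end

section
/- Let p be a monic real polynomial of degree n having exactly s real roots counted with multiplicity. Then there exist a symmetric tridiagonal matrix Td ∈ ℝ^{n×n} and a signature matrix J ∈ ℝ^{n×n} with sgn(J) = s such that p(x) = det(J)·det(x·J − Td). -/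
/-!
Over `ℝ` a monic polynomial is a product of linear factors `X - r`, one for each real root,
and of quadratics `(X - a)² + d²` coming from pairs of conjugate non-real roots `a ± d i`.
The `1 × 1` block `[r]` with sign `1` realises `X - r`, and the `2 × 2` block
`[[a, d], [d, -a]]` with signs `(1, -1)` realises `(X - a)² + d²` while contributing `0` to
the signature. The expression `det J · det (X J - T)` is multiplicative under block-diagonal
sums, and a block-diagonal sum of tridiagonal matrices is tridiagonal, so the blocks assemble
into the required pair, whose signature counts the linear factors, i.e. the real roots.
-/

open Polynomial Matrix BigOperators Finset

namespace Matrix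

section SignedCharpoly

variable {R : Type*} [CommRing R] {m n : Type*} [Fintype m] [Fintype n]
  [DecidableEq m] [DecidableEq n]

noncomputable def signedCharpoly (v : n → R) (T : Matrix n n R) : R[X] :=
  C (diagonal v).det * ((X : R[X]) • (diagonal v).map (C : R →+* R[X]) - T.map C).det

theorem signedCharpoly_reindex (e : m ≃ n) (v : m → R) (T : Matrix m m R) :
    signedCharpoly (v ∘ e.symm) (reindex e e T) = signedCharpoly v T := by
  have hdiag : diagonal (v ∘ e.symm) = reindex e e (diagonal v) :=
    (submatrix_diagonal_equiv v e.symm).symm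
  have hpencil : (X : R[X]) • (reindex e e (diagonal v)).map (C : R →+* R[X]) -
      (reindex e e T).map C = reindex e e ((X : R[X]) • (diagonal v).map C - T.map C) := by
    ext i j : 1
    simp [diagonal_apply]
  rw [signedCharpoly, hdiag, hpencil, det_reindex_self, det_reindex_self, signedCharpoly]

theorem signedCharpoly_fromBlocks (w : m → R) (v : n → R) (B : Matrix m m R)
    (T : Matrix n n R) :
    signedCharpoly (Sum.elim w v) (fromBlocks B 0 0 T) =
      signedCharpoly w B * signedCharpoly v T := by
  have hpencil : (X : R[X]) • (diagonal (Sum.elim w v)).map (C : R →+* R[X]) -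
      (fromBlocks B 0 0 T).map C =
      fromBlocks ((X : R[X]) • (diagonal w).map C - B.map C) 0 0
        ((X : R[X]) • (diagonal v).map C - T.map C) := by
    ext (i | i) (j | j) : 1 <;> simp [diagonal_apply]
  rw [signedCharpoly, hpencil, ← fromBlocks_diagonal, det_fromBlocks_zero₂₁,
    det_fromBlocks_zero₂₁, C_mul, signedCharpoly, signedCharpoly]
  ring

end SignedCharpoly

section Tridiagonal

variable {R : Type*} [Zero R]

def IsTridiagonal {n : ℕ} (T : Matrix (Fin n) (Fin n) R) : Prop :=
  ∀ i j : Fin n, ((i : ℕ) + 2 ≤ (j : ℕ) ∨ (j : ℕ) + 2 ≤ (i : ℕ)) → T i j = 0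

theorem isTridiagonal_of_le_two {n : ℕ} (hn : n ≤ 2) (T : Matrix (Fin n) (Fin n) R) :
    IsTridiagonal T := by
  intro i j _
  omega

theorem IsTridiagonal.reindex_fromBlocks {k m : ℕ} {B : Matrix (Fin k) (Fin k) R}
    {T : Matrix (Fin m) (Fin m) R} (hB : IsTridiagonal B) (hT : IsTridiagonal T) :
    IsTridiagonal (reindex finSumFinEquiv finSumFinEquiv (fromBlocks B 0 0 T)) := by
  intro i j
  obtain ⟨x, rfl⟩ := finSumFinEquiv.surjective i
  obtain ⟨y, rfl⟩ := finSumFinEquiv.surjective j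
  simp only [reindex_apply, submatrix_apply, Equiv.symm_apply_apply]
  rcases x with a | a <;> rcases y with b | b <;>
    simp only [fromBlocks_apply₁₁, fromBlocks_apply₁₂, fromBlocks_apply₂₁, fromBlocks_apply₂₂,
      Matrix.zero_apply, finSumFinEquiv_apply_left, finSumFinEquiv_apply_right, Fin.val_castAdd,
      Fin.val_natAdd, implies_true]
  · exact hB a b
  · intro h
    exact hT a b (by omega)

end Tridiagonal

end Matrix

def IsSignature {R n : Type*} [Ring R] (v : n → R) : Prop :=
  ∀ i, v i = 1 ∨ v i = -1

namespace Polynomial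

section SignedTridiagForm

variable {R : Type*} [CommRing R]

def HasSignedTridiagForm (p : R[X]) (n : ℕ) (s : R) : Prop :=
  ∃ T : Matrix (Fin n) (Fin n) R, T.IsSymm ∧ T.IsTridiagonal ∧
    ∃ v : Fin n → R, IsSignature v ∧ ∑ i, v i = s ∧ p = signedCharpoly v T

theorem HasSignedTridiagForm.mul {p q : R[X]} {k m : ℕ} {s t : R}
    (hp : HasSignedTridiagForm p k s) (hq : HasSignedTridiagForm q m t) :
    HasSignedTridiagForm (p * q) (k + m) (s + t) := by
  obtain ⟨B, hBsymm, hBtri, w, hw, rfl, rfl⟩ := hp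
  obtain ⟨T, hTsymm, hTtri, v, hv, rfl, rfl⟩ := hq
  refine ⟨reindex finSumFinEquiv finSumFinEquiv (fromBlocks B 0 0 T),
    (hBsymm.fromBlocks (by simp) hTsymm).submatrix _, hBtri.reindex_fromBlocks hTtri,
    Sum.elim w v ∘ finSumFinEquiv.symm, ?_, ?_, ?_⟩
  · intro i
    rw [Function.comp_apply]
    rcases finSumFinEquiv.symm i with a | a
    exacts [hw a, hv a]
  · exact (Fintype.sum_equiv finSumFinEquiv.symm _ _ fun _ => rfl).trans
      (Fintype.sum_sum_type _)
  · rw [signedCharpoly_reindex, signedCharpoly_fromBlocks]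

theorem hasSignedTridiagForm_one : HasSignedTridiagForm (1 : R[X]) 0 0 :=
  ⟨0, rfl, isTridiagonal_of_le_two (by norm_num) _, 0, fun i => i.elim0, by simp,
    by simp [signedCharpoly]⟩

theorem hasSignedTridiagForm_X_sub_C (r : R) : HasSignedTridiagForm (X - C r) 1 1 :=
  ⟨!![r], by ext i j; fin_cases i; fin_cases j; rfl, isTridiagonal_of_le_two (by norm_num) _,
    ![1], fun _ => Or.inl (by simp), by simp, by simp [signedCharpoly]⟩

theorem hasSignedTridiagForm_quadratic (a d : R) :
    HasSignedTridiagForm (X ^ 2 - C (2 * a) * X + C (a ^ 2 + d ^ 2)) 2 0 := by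
  refine ⟨!![a, d; d, -a], by ext i j; fin_cases i <;> fin_cases j <;> rfl,
    isTridiagonal_of_le_two le_rfl _, ![1, -1], ?_, by simp, ?_⟩
  · intro i
    fin_cases i <;> simp
  · simp [signedCharpoly, det_fin_two, map_add, map_mul, map_pow, map_ofNat]
    ring

end SignedTridiagForm

theorem exists_quadratic_dvd_of_roots_eq_zero {p : ℝ[X]} (hdeg : 0 < p.natDegree)
    (hroots : p.roots = 0) : ∃ z : ℂ, X ^ 2 - C (2 * z.re) * X + C (‖z‖ ^ 2) ∣ p := by
  have hp : p ≠ 0 := ne_zero_of_natDegree_gt hdeg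
  obtain ⟨z, hz⟩ :=
    IsAlgClosed.exists_aeval_eq_zero ℂ p (natDegree_pos_iff_degree_pos.mp hdeg).ne'
  have him : z.im ≠ 0 := by
    intro him
    have hre : p.IsRoot z.re := by
      rw [← Complex.re_add_im z, him, Complex.ofReal_zero, zero_mul, add_zero] at hz
      exact RCLike.ofReal_eq_zero.mp ((aeval_ofReal (K := ℂ) p z.re).symm.trans hz)
    simpa [hroots] using (mem_roots hp).mpr hre
  exact ⟨z, p.quadratic_dvd_of_aeval_eq_zero_im_ne_zero hz him⟩

theorem exists_monic_dvd_hasSignedTridiagForm {p : ℝ[X]} (hdeg : 0 < p.natDegree) :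
    ∃ g : ℝ[X], g.Monic ∧ 0 < g.natDegree ∧ g ∣ p ∧
      HasSignedTridiagForm g g.natDegree g.roots.card := by
  have hp : p ≠ 0 := ne_zero_of_natDegree_gt hdeg
  by_cases hroots : p.roots = 0
  · obtain ⟨z, hz⟩ := exists_quadratic_dvd_of_roots_eq_zero hdeg hroots
    have hmonic : (X ^ 2 - C (2 * z.re) * X + C (‖z‖ ^ 2)).Monic := by monicity!
    have hdeg2 : (X ^ 2 - C (2 * z.re) * X + C (‖z‖ ^ 2)).natDegree = 2 := by
      compute_degree!
    have hnoroots : (X ^ 2 - C (2 * z.re) * X + C (‖z‖ ^ 2)).roots = 0 :=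
      Multiset.le_zero.mp (hroots ▸ roots.le_of_dvd hp hz)
    refine ⟨_, hmonic, by omega, hz, ?_⟩
    rw [hdeg2, hnoroots, Multiset.card_zero, Nat.cast_zero, Complex.sq_norm,
      Complex.normSq_apply, ← sq, ← sq]
    exact hasSignedTridiagForm_quadratic z.re z.im
  · obtain ⟨r, hr⟩ := Multiset.exists_mem_of_ne_zero hroots
    refine ⟨X - C r, monic_X_sub_C r, by simp, dvd_iff_isRoot.mpr (isRoot_of_mem_roots hr), ?_⟩
    rw [natDegree_X_sub_C, roots_X_sub_C, Multiset.card_singleton, Nat.cast_one]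
    exact hasSignedTridiagForm_X_sub_C r

theorem Monic.hasSignedTridiagForm {p : ℝ[X]} (hp : p.Monic) :
    HasSignedTridiagForm p p.natDegree p.roots.card := by
  induction h : p.natDegree using Nat.strong_induction_on generalizing p with
  | _ n ih =>
  rcases Nat.eq_zero_or_pos n with hn | hn
  · rw [hp.natDegree_eq_zero.mp (h.trans hn), roots_one]
    simpa [hn] using hasSignedTridiagForm_one
  · obtain ⟨g, hg, hgdeg, ⟨q, rfl⟩, hgform⟩ := exists_monic_dvd_hasSignedTridiagForm (h ▸ hn)
    have hq : q.Monic := hg.of_mul_monic_left hp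
    have hdeg : n = g.natDegree + q.natDegree := h ▸ hg.natDegree_mul hq
    rw [hdeg, roots_mul (hg.mul hq).ne_zero, Multiset.card_add, Nat.cast_add]
    exact hgform.mul (ih _ (by omega) hq rfl)

end Polynomial

theorem stmt_19_general (n : ℕ) (p : Polynomial ℝ)
    (hp : p.Monic) (hpdeg : p.natDegree = n)
    (s : ℕ) (hs : p.roots.card = s) :
    ∃ Td : Matrix (Fin n) (Fin n) ℝ, Td.IsSymm ∧
      (∀ i j : Fin n, ((i : ℕ) + 2 ≤ (j : ℕ) ∨ (j : ℕ) + 2 ≤ (i : ℕ)) → Td i j = 0) ∧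
      ∃ v : Fin n → ℝ, (∀ i, v i = 1 ∨ v i = -1) ∧ (∑ i : Fin n, v i) = (s : ℝ) ∧
        p = Polynomial.C (Matrix.diagonal v).det *
          ((Polynomial.X : Polynomial ℝ) •
              (Matrix.diagonal v).map (Polynomial.C : ℝ →+* Polynomial ℝ)
            - Td.map (Polynomial.C : ℝ →+* Polynomial ℝ)).det := by
  subst hpdeg hs
  exact hp.hasSignedTridiagForm

/-- Let `p` be a monic real polynomial of degree `n` having exactly `s` real roots
counted with multiplicity.  Then there exist a symmetric tridiagonal matrix
`Td ∈ ℝ^{n×n}` and a signature matrix `J = diagonal v` with `sgn(J) = s` such that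
`p(x) = det(J)·det(x·J − Td)`. -/
theorem stmt_19 (n : ℕ) (hn : 1 ≤ n) (p : Polynomial ℝ)
    (hp : p.Monic) (hpdeg : p.natDegree = n)
    (s : ℕ) (hs : p.roots.card = s) :
    ∃ Td : Matrix (Fin n) (Fin n) ℝ, Td.IsSymm ∧
      (∀ i j : Fin n, ((i : ℕ) + 2 ≤ (j : ℕ) ∨ (j : ℕ) + 2 ≤ (i : ℕ)) → Td i j = 0) ∧
      ∃ v : Fin n → ℝ, (∀ i, v i = 1 ∨ v i = -1) ∧ (∑ i : Fin n, v i) = (s : ℝ) ∧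
        p = Polynomial.C (Matrix.diagonal v).det *
          ((Polynomial.X : Polynomial ℝ) •
              (Matrix.diagonal v).map (Polynomial.C : ℝ →+* Polynomial ℝ)
            - Td.map (Polynomial.C : ℝ →+* Polynomial ℝ)).det :=
  stmt_19_general n p hp hpdeg s hs
end
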